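/- arXiv:math/9912067 — 3 statements merged into one kernel-verified Lean document; each statement's English description precedes it below -/
import Mathlib

section
/- For all integers a, b with 1 ≤ a ≤ r−1 and 0 ≤ b ≤ r, set U = D⁰_{ω_{a+1},ω_b} ∪ t_{a+1}·D⁰_{ω_{a+1},ω_b}. Then the set {1, t_a, s_a, s_a t_a}·(D⁰_{ω_a,ω_b} \ U) is disjoint from the union ⋃_{ε₁, ε₂ ∈ {0,1}} t_a^{ε₁} t_{a+1}^{ε₂}·D⁰_{ω_{a+1},ω_b}. -/
open SemidirectProduct

abbrev NB (r : ℕ) := Fin r → Multiplicative (ZMod 2)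

def permAct (r : ℕ) : Equiv.Perm (Fin r) →* MulAut (NB r) where
  toFun σ :=
    { toFun := fun c => c ∘ σ.symm
      invFun := fun c => c ∘ σ
      left_inv := fun c => by ext i; simp
      right_inv := fun c => by ext i; simp
      map_mul' := fun c d => rfl }
  map_one' := rfl
  map_mul' := fun σ τ => rfl

abbrev WB (r : ℕ) := NB r ⋊[permAct r] Equiv.Perm (Fin r)

/-- The vector `e_i` with single nonzero entry at position `i`. -/
def eVec (r : ℕ) (i : Fin r) : NB r := fun j => if j = i then Multiplicative.ofAdd 1 else 1

/-- `tB r i` is the element `t_{i+1} = (e_{i+1}, 1)` of the paper (0-indexed `i`). -/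
def tB (r : ℕ) (i : ℕ) : WB r := if h : i < r then ⟨eVec r ⟨i, h⟩, 1⟩ else 1

/-- `sB r i` is the simple reflection `s_i = (0, (i, i+1))` of the paper (1-indexed,
`1 ≤ i ≤ r - 1`); in 0-indexed terms it swaps positions `i-1` and `i`. -/
def sB (r : ℕ) (i : ℕ) : WB r :=
  if h : 0 < i ∧ i < r then ⟨1, Equiv.swap ⟨i - 1, by omega⟩ ⟨i, h.2⟩⟩ else 1

/-- The Coxeter generating set `S = {s₀, s₁, …, s_{r-1}}` where `s₀ = t₁`. -/
def genS (r : ℕ) : Set (WB r) :=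
  {tB r 0} ∪ {w | ∃ i, 1 ≤ i ∧ i < r ∧ w = sB r i}

/-- Length with respect to `S`: the least `n` such that `w` is a product of `n`
elements of `S`. -/
noncomputable def len (r : ℕ) (w : WB r) : ℕ :=
  sInf {n | ∃ l : List (WB r), (∀ x ∈ l, x ∈ genS r) ∧ l.length = n ∧ l.prod = w}

/-- `C_{ω_a} = ⟨t₁, …, t_a⟩`. -/
def Comega (r a : ℕ) : Subgroup (WB r) :=
  Subgroup.closure {w | ∃ i, i < a ∧ w = tB r i}

/-- Distinguished right `C_{ω_a}`-coset representatives. -/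
def Dright (r a : ℕ) : Set (WB r) :=
  {d | ∀ w ∈ Comega r a, len r d ≤ len r (w * d)}

/-- Distinguished double `C_{ω_a}`-`C_{ω_b}` coset representatives. -/
def Dab (r a b : ℕ) : Set (WB r) :=
  {d | d ∈ Dright r a ∧ d⁻¹ ∈ Dright r b}

/-- Distinguished double coset representatives with the trivial intersection property. -/
def D0 (r a b : ℕ) : Set (WB r) :=
  {d | d ∈ Dab r a b ∧ ∀ x ∈ Comega r a, d⁻¹ * x * d ∈ Comega r b → x = 1}

/-- `n₀ w` : the number of nonzero coordinates of the `(ZMod 2)^r`-component of `w`. -/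
def n0 (r : ℕ) (w : WB r) : ℕ :=
  (Finset.univ.filter fun i => w.left i ≠ 1).card

open Pointwise

namespace Stmt6Aux
section
variable {r : ℕ}


variable {r : ℕ}

def invC (v : Fin r → ℤ) : ℕ :=
  (Finset.univ.filter fun p : Fin r × Fin r => p.1 < p.2 ∧ v p.2 < v p.1).card

def nsC (v : Fin r → ℤ) : ℕ := ∑ j, if v j < 0 then (v j).natAbs else 0

def LL (v : Fin r → ℤ) : ℕ := invC v + nsC v

def SP (v : Fin r → ℤ) : Prop :=
  (∀ j, v j ≠ 0) ∧ Function.Injective fun j => (v j).natAbs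

lemma SP.natAbs_pos {v : Fin r → ℤ} (h : SP v) (j : Fin r) : 1 ≤ (v j).natAbs := by
  have := h.1 j; omega

/-- the count of positions with small absolute value is at most `m - 1`. -/
lemma card_small (v : Fin r → ℤ) (h : SP v) (m : ℕ) :
    (Finset.univ.filter fun j : Fin r => (v j).natAbs < m).card ≤ m - 1 := by
  have : (Finset.univ.filter fun j : Fin r => (v j).natAbs < m).card ≤
      (Finset.Ico 1 m).card := by
    apply Finset.card_le_card_of_injOn (fun j => (v j).natAbs)
    · intro j hj
      simp only [Finset.mem_coe, Finset.mem_filter] at hj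
      have := h.natAbs_pos j
      simp only [Finset.mem_coe, Finset.mem_Ico]
      omega
    · intro x _ y _ hxy
      exact h.2 hxy
  simpa using this

lemma nsC_update (v : Fin r → ℤ) (p : Fin r) (c : ℤ) :
    nsC (Function.update v p c) + (if v p < 0 then (v p).natAbs else 0)
      = nsC v + (if c < 0 then c.natAbs else 0) := by
  classical
  have key : ∀ (w : Fin r → ℤ),
      nsC w = (if w p < 0 then (w p).natAbs else 0)
        + ∑ j ∈ Finset.univ.erase p, (if w j < 0 then (w j).natAbs else 0) := by
    intro w
    rw [nsC, ← Finset.add_sum_erase _ _ (Finset.mem_univ p)]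
  rw [key (Function.update v p c), key v]
  have : ∑ j ∈ Finset.univ.erase p, (if Function.update v p c j < 0 then
      (Function.update v p c j).natAbs else 0)
      = ∑ j ∈ Finset.univ.erase p, (if v j < 0 then (v j).natAbs else 0) := by
    apply Finset.sum_congr rfl
    intro j hj
    rw [Function.update_of_ne (Finset.ne_of_mem_erase hj)]
  rw [this, Function.update_self]
  ring

/-- changed inversion pairs inject into small positions -/
lemma invC_update_le (v : Fin r → ℤ) (h : SP v) (p : Fin r) :
    invC (Function.update v p (-(v p))) ≤ invC v + ((v p).natAbs - 1) := by
  classical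
  set v' := Function.update v p (-(v p)) with hv'
  set m := (v p).natAbs with hm
  set P := fun x : Fin r × Fin r => x.1 < x.2 ∧ v x.2 < v x.1 with hP
  set P' := fun x : Fin r × Fin r => x.1 < x.2 ∧ v' x.2 < v' x.1 with hP'
  have hsub : (Finset.univ.filter P') ⊆
      (Finset.univ.filter P) ∪ (Finset.univ.filter fun x => P' x ∧ ¬ P x) := by
    intro x hx
    simp only [Finset.mem_filter, Finset.mem_union] at *
    tauto
  have hD : (Finset.univ.filter fun x : Fin r × Fin r => P' x ∧ ¬ P x).card ≤
      (Finset.univ.filter fun j : Fin r => (v j).natAbs < m).card := by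
    apply Finset.card_le_card_of_injOn (fun x => if x.1 = p then x.2 else x.1)
    · intro x hx
      simp only [Finset.mem_coe, Finset.mem_filter, Finset.mem_univ, true_and] at hx ⊢
      obtain ⟨⟨hlt, hvv⟩, hnP⟩ := hx
      by_cases h1 : x.1 = p
      · -- x = (p, j); v' x.2 = v x.2 since x.2 ≠ p
        have h2 : x.2 ≠ p := by rw [← h1]; exact hlt.ne'
        rw [if_pos h1]
        have e2 : v' x.2 = v x.2 := Function.update_of_ne h2 _ _
        have e1 : v' x.1 = -(v p) := by rw [h1]; exact Function.update_self _ _ _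
        rw [e1, e2] at hvv
        have hnabs : (v x.2).natAbs ≠ m := fun hc => h2 (h.2 hc)
        have : ¬ (v x.2 < v x.1) := fun hc => hnP ⟨hlt, hc⟩
        rw [h1] at this
        omega
      · have h2 : x.2 = p := by
          by_contra h2
          have e1 : v' x.1 = v x.1 := Function.update_of_ne h1 _ _
          have e2 : v' x.2 = v x.2 := Function.update_of_ne h2 _ _
          rw [e1, e2] at hvv
          exact hnP ⟨hlt, hvv⟩
        rw [if_neg h1]
        have e1 : v' x.1 = v x.1 := Function.update_of_ne h1 _ _
        have e2 : v' x.2 = -(v p) := by rw [h2]; exact Function.update_self _ _ _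
        rw [e1, e2] at hvv
        have hnabs : (v x.1).natAbs ≠ m := fun hc => h1 (h.2 hc)
        have : ¬ (v x.2 < v x.1) := fun hc => hnP ⟨hlt, hc⟩
        rw [h2] at this
        omega
    · intro x hx y hy hxy
      simp only [Finset.coe_filter, Set.mem_setOf_eq, Finset.mem_univ, true_and] at hx hy
      obtain ⟨⟨hltx, hvx⟩, hnPx⟩ := hx
      obtain ⟨⟨hlty, hvy⟩, hnPy⟩ := hy
      -- as computed above, if x.1 ≠ p then x.2 = p (and similarly for y)
      have hx2 : x.1 ≠ p → x.2 = p := by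
        intro h1; by_contra h2
        have e1 : v' x.1 = v x.1 := Function.update_of_ne h1 _ _
        have e2 : v' x.2 = v x.2 := Function.update_of_ne h2 _ _
        rw [e1, e2] at hvx; exact hnPx ⟨hltx, hvx⟩
      have hy2 : y.1 ≠ p → y.2 = p := by
        intro h1; by_contra h2
        have e1 : v' y.1 = v y.1 := Function.update_of_ne h1 _ _
        have e2 : v' y.2 = v y.2 := Function.update_of_ne h2 _ _
        rw [e1, e2] at hvy; exact hnPy ⟨hlty, hvy⟩
      by_cases h1 : x.1 = p <;> by_cases h2 : y.1 = p
      · simp only [if_pos h1, if_pos h2] at hxy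
        exact Prod.ext (h1.trans h2.symm) hxy
      · simp only [if_pos h1, if_neg h2] at hxy
        exfalso
        have e : y.2 = p := hy2 h2
        rw [h1, hxy] at hltx
        rw [e] at hlty
        exact absurd hltx (not_lt.mpr hlty.le)
      · simp only [if_neg h1, if_pos h2] at hxy
        exfalso
        have e : x.2 = p := hx2 h1
        rw [e, hxy] at hltx
        rw [h2] at hlty
        exact absurd hltx (not_lt.mpr hlty.le)
      · simp only [if_neg h1, if_neg h2] at hxy
        exact Prod.ext hxy ((hx2 h1).trans (hy2 h2).symm)
  calc invC v' ≤ (Finset.univ.filter P).card +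
      (Finset.univ.filter fun x => P' x ∧ ¬ P x).card :=
        le_trans (Finset.card_le_card hsub) (Finset.card_union_le _ _)
    _ ≤ invC v + (m - 1) := by
        have := card_small v h m
        exact Nat.add_le_add le_rfl (le_trans hD this)


lemma SP_update {v : Fin r → ℤ} (h : SP v) (p : Fin r) : SP (Function.update v p (-(v p))) := by
  constructor
  · intro j
    by_cases hj : j = p
    · subst hj; rw [Function.update_self]; have := h.1 j; omega
    · rw [Function.update_of_ne hj]; exact h.1 j
  · intro x y hxy
    simp only at hxy
    apply h.2
    simp only
    by_cases hx : x = p <;> by_cases hy : y = p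
    · rw [hx, hy]
    · rw [hx] at hxy ⊢
      rw [Function.update_self, Function.update_of_ne hy] at hxy
      omega
    · rw [hy] at hxy ⊢
      rw [Function.update_self, Function.update_of_ne hx] at hxy
      omega
    · rwa [Function.update_of_ne hx, Function.update_of_ne hy] at hxy

lemma update_update (v : Fin r → ℤ) (p : Fin r) :
    Function.update (Function.update v p (-(v p))) p
      (-(Function.update v p (-(v p)) p)) = v := by
  funext j
  by_cases hj : j = p
  · subst hj; simp
  · simp [Function.update_of_ne hj]

lemma LL_flip_up {v : Fin r → ℤ} (h : SP v) (p : Fin r) (hp : 0 < v p) :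
    LL v + 1 ≤ LL (Function.update v p (-(v p))) := by
  set v' := Function.update v p (-(v p)) with hv'
  have h1 : invC v ≤ invC v' + ((v p).natAbs - 1) := by
    have := invC_update_le v' (SP_update h p) p
    rw [update_update] at this
    have e : (v' p).natAbs = (v p).natAbs := by rw [hv', Function.update_self]; omega
    rw [e] at this
    exact this
  have h2 : nsC v' + (if v p < 0 then (v p).natAbs else 0)
      = nsC v + (if -(v p) < 0 then (v p).natAbs else 0) := by
    have := nsC_update v p (-(v p))
    rwa [Int.natAbs_neg] at this
  rw [if_neg (by omega), if_pos (by omega)] at h2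
  have hm : 1 ≤ (v p).natAbs := by omega
  unfold LL
  omega

lemma LL_flip_down {v : Fin r → ℤ} (h : SP v) (p : Fin r) (hp : v p < 0) :
    LL (Function.update v p (-(v p))) + 1 ≤ LL v := by
  have := LL_flip_up (SP_update h p) p (by rw [Function.update_self]; omega)
  rwa [update_update] at this

lemma LL_flip_le {v : Fin r → ℤ} (h : SP v) (p : Fin r) (hp : (v p).natAbs = 1) :
    LL (Function.update v p (-(v p))) ≤ LL v + 1 := by
  set v' := Function.update v p (-(v p)) with hv'
  have h1 : invC v' ≤ invC v := by
    have := invC_update_le v h p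
    rw [hp] at this; simpa using this
  have h2 : nsC v' + (if v p < 0 then (v p).natAbs else 0)
      = nsC v + (if -(v p) < 0 then (v p).natAbs else 0) := by
    have := nsC_update v p (-(v p))
    rwa [Int.natAbs_neg] at this
  unfold LL
  by_cases hs : v p < 0
  · rw [if_pos hs, if_neg (by omega)] at h2; omega
  · rw [if_neg hs, if_pos (by have := h.1 p; omega)] at h2; omega


def fswap (m : ℕ) (u : ℤ) : ℤ :=
  if u = (m : ℤ) then (m : ℤ) + 1 else if u = (m : ℤ) + 1 then (m : ℤ)
  else if u = -(m : ℤ) then -((m : ℤ) + 1) else if u = -((m : ℤ) + 1) then -(m : ℤ) else u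

lemma fswap_fix (m : ℕ) (u : ℤ) (h1 : u.natAbs ≠ m) (h2 : u.natAbs ≠ m + 1) :
    fswap m u = u := by
  unfold fswap; split_ifs <;> omega

lemma fswap_order (m : ℕ) (u x : ℤ) (h1 : u.natAbs ≠ m) (h2 : u.natAbs ≠ m + 1) :
    (fswap m x < u ↔ x < u) ∧ (u < fswap m x ↔ u < x) := by
  unfold fswap; split_ifs <;> omega

lemma swap_sorted {p q i j : Fin r} (hq : (q : ℕ) = (p : ℕ) + 1) (hij : i < j)
    (hne : ¬(i = p ∧ j = q)) : Equiv.swap p q i < Equiv.swap p q j := by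
  rw [Equiv.swap_apply_def, Equiv.swap_apply_def]
  split_ifs <;> simp only [Fin.ext_iff, Fin.lt_def, not_and] at * <;> omega

lemma LL_swappos (v : Fin r → ℤ) (p q : Fin r) (hq : (q : ℕ) = (p : ℕ) + 1)
    (h : v q < v p) : LL (v ∘ Equiv.swap p q) + 1 ≤ LL v := by
  classical
  have hpq : p < q := by rw [Fin.lt_def]; omega
  have hns : nsC (v ∘ Equiv.swap p q) = nsC v := by
    unfold nsC
    exact Equiv.sum_comp (Equiv.swap p q) (fun j => if v j < 0 then (v j).natAbs else 0)
  have hinv : invC (v ∘ Equiv.swap p q) + 1 ≤ invC v := by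
    set P := fun x : Fin r × Fin r => x.1 < x.2 ∧ v x.2 < v x.1 with hP
    have hmem : (p, q) ∈ Finset.univ.filter P := by
      simp only [Finset.mem_filter, Finset.mem_univ, true_and, hP]
      exact ⟨hpq, h⟩
    have hiv : invC (v ∘ Equiv.swap p q) = (Finset.univ.filter (fun x : Fin r × Fin r =>
        x.1 < x.2 ∧ (v ∘ Equiv.swap p q) x.2 < (v ∘ Equiv.swap p q) x.1)).card := rfl
    have hcard : (Finset.univ.filter (fun x : Fin r × Fin r =>
        x.1 < x.2 ∧ (v ∘ Equiv.swap p q) x.2 < (v ∘ Equiv.swap p q) x.1)).card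
        ≤ ((Finset.univ.filter P).erase (p, q)).card := by
      apply Finset.card_le_card_of_injOn
        (fun x => (Equiv.swap p q x.1, Equiv.swap p q x.2))
      · intro x hx
        simp only [Finset.mem_coe, Finset.mem_filter, Finset.mem_univ, true_and,
          Function.comp_apply] at hx
        obtain ⟨hlt, hvv⟩ := hx
        have hxne : ¬(x.1 = p ∧ x.2 = q) := by
          rintro ⟨e1, e2⟩
          rw [e1, e2, Equiv.swap_apply_left, Equiv.swap_apply_right] at hvv
          exact absurd hvv (not_lt.mpr h.le)
        rw [Finset.mem_coe, Finset.mem_erase]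
        refine ⟨?_, ?_⟩
        · intro hc
          simp only [Prod.mk.injEq] at hc
          have e1 : x.1 = q := by
            have h1 := hc.1
            have : Equiv.swap p q (Equiv.swap p q x.1) = Equiv.swap p q p := by rw [h1]
            rwa [Equiv.swap_apply_self, Equiv.swap_apply_left] at this
          have e2 : x.2 = p := by
            have h2 := hc.2
            have : Equiv.swap p q (Equiv.swap p q x.2) = Equiv.swap p q q := by rw [h2]
            rwa [Equiv.swap_apply_self, Equiv.swap_apply_right] at this
          rw [e1, e2] at hlt
          exact absurd hlt (not_lt.mpr hpq.le)
        · simp only [Finset.mem_filter, Finset.mem_univ, true_and, hP]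
          exact ⟨swap_sorted hq hlt hxne, hvv⟩
      · intro x _ y _ hxy
        rw [Prod.ext_iff] at hxy ⊢
        exact ⟨(Equiv.swap p q).injective hxy.1, (Equiv.swap p q).injective hxy.2⟩
    have h1 : 1 ≤ (Finset.univ.filter P).card := Finset.card_pos.mpr ⟨_, hmem⟩
    have h2 : ((Finset.univ.filter P).erase (p, q)).card = (Finset.univ.filter P).card - 1 :=
      Finset.card_erase_of_mem hmem
    have : invC v = (Finset.univ.filter P).card := rfl
    omega
  unfold LL
  omega

lemma fswap_eval_1 (m : ℕ) : fswap m (m : ℤ) = (m : ℤ) + 1 := by unfold fswap; split_ifs <;> omega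
lemma fswap_eval_2 (m : ℕ) : fswap m ((m : ℤ) + 1) = (m : ℤ) := by unfold fswap; split_ifs <;> omega
lemma fswap_eval_3 (m : ℕ) (hm : 1 ≤ m) : fswap m (-(m : ℤ)) = -((m : ℤ) + 1) := by
  unfold fswap; split_ifs <;> omega
lemma fswap_eval_4 (m : ℕ) (hm : 1 ≤ m) : fswap m (-((m : ℤ) + 1)) = -(m : ℤ) := by
  unfold fswap; split_ifs <;> omega

lemma LL_swapval {v : Fin r → ℤ} (h : SP v) (m : ℕ) (hm : 1 ≤ m) (p q : Fin r)
    (hp : (v p).natAbs = m) (hq : (v q).natAbs = m + 1) :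
    LL (fswap m ∘ v) ≤ LL v + 1 := by
  classical
  have hpq : p ≠ q := by intro hc; rw [hc, hq] at hp; omega
  have fix : ∀ j : Fin r, j ≠ p → j ≠ q → fswap m (v j) = v j := by
    intro j hjp hjq
    refine fswap_fix m (v j) (fun hc => hjp (h.2 ?_)) (fun hc => hjq (h.2 ?_))
    · simp only; omega
    · simp only; omega
  have pres : ∀ x : Fin r × Fin r, x ≠ (p, q) → x ≠ (q, p) →
      ((fswap m (v x.2) < fswap m (v x.1)) ↔ (v x.2 < v x.1)) := by
    intro x h1 h2
    rcases eq_or_ne x.1 p with e1 | e1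
    · rcases eq_or_ne x.2 p with e2 | e2
      · rw [e1, e2]; exact iff_of_false (lt_irrefl _) (lt_irrefl _)
      · have e2q : x.2 ≠ q := fun hc => h1 (Prod.ext e1 hc)
        rw [e1, fix x.2 e2 e2q]
        exact (fswap_order m (v x.2) (v p)
          (fun hc => e2 (h.2 (by simp only; omega)))
          (fun hc => e2q (h.2 (by simp only; omega)))).2
    · rcases eq_or_ne x.1 q with e1q | e1q
      · rcases eq_or_ne x.2 q with e2 | e2
        · rw [e1q, e2]; exact iff_of_false (lt_irrefl _) (lt_irrefl _)
        · have e2p : x.2 ≠ p := fun hc => h2 (Prod.ext e1q hc)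
          rw [e1q, fix x.2 e2p e2]
          exact (fswap_order m (v x.2) (v q)
            (fun hc => e2p (h.2 (by simp only; omega)))
            (fun hc => e2 (h.2 (by simp only; omega)))).2
      · rw [fix x.1 e1 e1q]
        rcases eq_or_ne x.2 p with e2 | e2
        · rw [e2]
          exact (fswap_order m (v x.1) (v p)
            (fun hc => e1 (h.2 (by simp only; omega)))
            (fun hc => e1q (h.2 (by simp only; omega)))).1
        · rcases eq_or_ne x.2 q with e2q | e2q
          · rw [e2q]
            exact (fswap_order m (v x.1) (v q)
              (fun hc => e1 (h.2 (by simp only; omega)))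
              (fun hc => e1q (h.2 (by simp only; omega)))).1
          · rw [fix x.2 e2 e2q]
  have hinv_le : invC (fswap m ∘ v) ≤ invC v + 1 := by
    set e0 : Fin r × Fin r := if p < q then (p, q) else (q, p) with he0
    have hsub : (Finset.univ.filter fun x : Fin r × Fin r =>
        x.1 < x.2 ∧ (fswap m ∘ v) x.2 < (fswap m ∘ v) x.1)
        ⊆ insert e0 (Finset.univ.filter fun x : Fin r × Fin r =>
          x.1 < x.2 ∧ v x.2 < v x.1) := by
      intro x hx
      simp only [Finset.mem_filter, Finset.mem_univ, true_and, Function.comp_apply] at hx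
      rw [Finset.mem_insert]
      rcases eq_or_ne x (p, q) with h1 | h1
      · have : p < q := by rw [h1] at hx; exact hx.1
        left; rw [he0, if_pos this, h1]
      · rcases eq_or_ne x (q, p) with h2 | h2
        · have hqp : q < p := by rw [h2] at hx; exact hx.1
          left; rw [he0, if_neg (not_lt.mpr hqp.le), h2]
        · right
          simp only [Finset.mem_filter, Finset.mem_univ, true_and]
          exact ⟨hx.1, (pres x h1 h2).mp hx.2⟩
    calc invC (fswap m ∘ v) ≤ (insert e0 (Finset.univ.filter fun x : Fin r × Fin r =>
          x.1 < x.2 ∧ v x.2 < v x.1)).card := Finset.card_le_card hsub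
      _ ≤ invC v + 1 := by
          rw [invC]
          have := Finset.card_insert_le e0 (Finset.univ.filter fun x : Fin r × Fin r =>
            x.1 < x.2 ∧ v x.2 < v x.1)
          omega
  have hinv_eq : ((fswap m (v q) < fswap m (v p)) ↔ (v q < v p)) →
      ((fswap m (v p) < fswap m (v q)) ↔ (v p < v q)) → invC (fswap m ∘ v) = invC v := by
    intro i1 i2
    unfold invC
    apply congrArg
    apply Finset.filter_congr
    intro x _
    apply and_congr_right
    intro _
    rcases eq_or_ne x (p, q) with h1 | h1
    · rw [h1]; exact i1
    · rcases eq_or_ne x (q, p) with h2 | h2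
      · rw [h2]; exact i2
      · exact pres x h1 h2
  have hns : nsC (fswap m ∘ v)
      + (if v p < 0 then (v p).natAbs else 0) + (if v q < 0 then (v q).natAbs else 0)
      = nsC v + (if fswap m (v p) < 0 then (fswap m (v p)).natAbs else 0)
        + (if fswap m (v q) < 0 then (fswap m (v q)).natAbs else 0) := by
    have key : ∀ w : Fin r → ℤ, nsC w = (if w p < 0 then (w p).natAbs else 0)
        + ((if w q < 0 then (w q).natAbs else 0)
        + ∑ j ∈ (Finset.univ.erase p).erase q, (if w j < 0 then (w j).natAbs else 0)) := by
      intro w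
      rw [nsC, ← Finset.add_sum_erase _ _ (Finset.mem_univ p),
        ← Finset.add_sum_erase _ (fun j => if w j < 0 then (w j).natAbs else 0)
          (Finset.mem_erase.mpr ⟨Ne.symm hpq, Finset.mem_univ q⟩)]
    have tail : ∑ j ∈ (Finset.univ.erase p).erase q,
        (if (fswap m ∘ v) j < 0 then ((fswap m ∘ v) j).natAbs else 0)
        = ∑ j ∈ (Finset.univ.erase p).erase q, (if v j < 0 then (v j).natAbs else 0) := by
      apply Finset.sum_congr rfl
      intro j hj
      rw [Finset.mem_erase, Finset.mem_erase] at hj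
      rw [Function.comp_apply, fix j hj.2.1 hj.1]
    rw [key (fswap m ∘ v), key v, tail]
    simp only [Function.comp_apply]
    ring
  -- now case analysis on the signs of v p and v q
  have hvp : v p = (m : ℤ) ∨ v p = -(m : ℤ) := by omega
  have hvq : v q = (m : ℤ) + 1 ∨ v q = -((m : ℤ) + 1) := by omega
  unfold LL
  rcases hvp with hvp | hvp <;> rcases hvq with hvq | hvq
  · -- (+,+) : ns unchanged, inv ≤ +1
    rw [hvp, hvq, fswap_eval_1, fswap_eval_2] at hns
    have h1 := hinv_le
    split_ifs at hns <;> omega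
  · -- (+,-) : ns decreases, inv unchanged
    have hie := hinv_eq (by rw [hvp, hvq, fswap_eval_1, fswap_eval_4 m hm]; omega)
      (by rw [hvp, hvq, fswap_eval_1, fswap_eval_4 m hm]; omega)
    rw [hvp, hvq, fswap_eval_1, fswap_eval_4 m hm] at hns
    split_ifs at hns <;> omega
  · -- (-,+) : ns increases by 1, inv unchanged
    have hie := hinv_eq (by rw [hvp, hvq, fswap_eval_3 m hm, fswap_eval_2]; omega)
      (by rw [hvp, hvq, fswap_eval_3 m hm, fswap_eval_2]; omega)
    rw [hvp, hvq, fswap_eval_3 m hm, fswap_eval_2] at hns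
    split_ifs at hns <;> omega
  · -- (-,-) : ns unchanged, inv ≤ +1
    have h1 := hinv_le
    rw [hvp, hvq, fswap_eval_3 m hm, fswap_eval_4 m hm] at hns
    split_ifs at hns <;> omega



/-! ### the signed-value vector of an element of `WB r` -/

def vfun (w : WB r) : Fin r → ℤ :=
  fun j => if w.left (w.right j) = 1 then (((w.right j : ℕ) : ℤ) + 1)
    else -(((w.right j : ℕ) : ℤ) + 1)

lemma natAbs_vfun (w : WB r) (j : Fin r) : (vfun w j).natAbs = (w.right j : ℕ) + 1 := by
  unfold vfun; split_ifs <;> omega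

lemma SP_vfun (w : WB r) : SP (vfun w) := by
  constructor
  · intro j
    unfold vfun; split_ifs <;> omega
  · intro x y hxy
    simp only [natAbs_vfun] at hxy
    have : w.right x = w.right y := Fin.ext (by omega)
    exact w.right.injective this

lemma mz_sq (x : Multiplicative (ZMod 2)) : x * x = 1 := by revert x; decide

lemma mz_cases (x : Multiplicative (ZMod 2)) : x = 1 ∨ x = Multiplicative.ofAdd 1 := by
  revert x; decide

lemma mz_inv (x : Multiplicative (ZMod 2)) : x⁻¹ = x := by revert x; decide

lemma mz_ofAdd_ne_one : (Multiplicative.ofAdd (1 : ZMod 2)) ≠ 1 := by decide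

lemma tB_eq (i : ℕ) (h : i < r) : tB r i = ⟨eVec r ⟨i, h⟩, 1⟩ := by rw [tB, dif_pos h]

lemma sB_eq (i : ℕ) (h1 : 1 ≤ i) (h2 : i < r) :
    sB r i = ⟨1, Equiv.swap ⟨i - 1, by omega⟩ ⟨i, h2⟩⟩ := by
  rw [sB, dif_pos (by omega : 0 < i ∧ i < r)]

lemma permAct_apply (σ : Equiv.Perm (Fin r)) (c : NB r) (x : Fin r) :
    (permAct r σ c) x = c (σ.symm x) := rfl

lemma tB_mul_left (i : ℕ) (h : i < r) (w : WB r) (x : Fin r) :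
    (tB r i * w).left x = eVec r ⟨i, h⟩ x * w.left x := by
  rw [tB_eq i h, SemidirectProduct.mul_left]
  simp only [map_one]
  rfl

lemma tB_mul_right (i : ℕ) (h : i < r) (w : WB r) : (tB r i * w).right = w.right := by
  rw [tB_eq i h, SemidirectProduct.mul_right, one_mul]

lemma sB_mul_left (i : ℕ) (h1 : 1 ≤ i) (h2 : i < r) (w : WB r) (x : Fin r) :
    (sB r i * w).left x = w.left (Equiv.swap ⟨i - 1, by omega⟩ ⟨i, h2⟩ x) := by
  rw [sB_eq i h1 h2, SemidirectProduct.mul_left, one_mul, permAct_apply,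
    Equiv.symm_swap]

lemma sB_mul_right (i : ℕ) (h1 : 1 ≤ i) (h2 : i < r) (w : WB r) :
    (sB r i * w).right = Equiv.swap ⟨i - 1, by omega⟩ ⟨i, h2⟩ * w.right := by
  rw [sB_eq i h1 h2, SemidirectProduct.mul_right]

lemma vfun_tmul (i : ℕ) (h : i < r) (w : WB r) :
    vfun (tB r i * w) = Function.update (vfun w) (w.right⁻¹ ⟨i, h⟩)
      (-(vfun w (w.right⁻¹ ⟨i, h⟩))) := by
  funext j
  have hr1 : (tB r i * w).right = w.right := tB_mul_right i h w
  by_cases hj : j = w.right⁻¹ ⟨i, h⟩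
  · subst hj
    rw [Function.update_self]
    have e1 : w.right (w.right⁻¹ ⟨i, h⟩) = ⟨i, h⟩ := Equiv.apply_symm_apply _ _
    unfold vfun
    rw [hr1, e1, tB_mul_left i h w]
    have e2 : eVec r ⟨i, h⟩ ⟨i, h⟩ = Multiplicative.ofAdd 1 := by rw [eVec, if_pos rfl]
    rw [e2]
    rcases mz_cases (w.left ⟨i, h⟩) with hc | hc <;> rw [hc]
    · rw [if_neg (by decide), if_pos rfl]
    · rw [if_pos (by decide), if_neg (by decide), neg_neg]
  · rw [Function.update_of_ne hj]
    have e1 : w.right j ≠ ⟨i, h⟩ := by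
      intro hc
      exact hj (by rw [← hc, Equiv.Perm.inv_def, Equiv.symm_apply_apply])
    unfold vfun
    rw [hr1, tB_mul_left i h w]
    have e2 : eVec r ⟨i, h⟩ (w.right j) = 1 := by rw [eVec, if_neg e1]
    rw [e2, one_mul]

lemma vfun_smul (i : ℕ) (h1 : 1 ≤ i) (h2 : i < r) (w : WB r) :
    vfun (sB r i * w) = fswap i ∘ vfun w := by
  funext j
  set A : Fin r := ⟨i - 1, by omega⟩ with hA
  set B : Fin r := ⟨i, h2⟩ with hB
  have hr1 : (sB r i * w).right j = Equiv.swap A B (w.right j) := by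
    rw [sB_mul_right i h1 h2]; rfl
  have hl1 : (sB r i * w).left ((sB r i * w).right j) = w.left (w.right j) := by
    rw [sB_mul_left i h1 h2, hr1, Equiv.swap_apply_self]
  rcases eq_or_ne (w.right j) A with hc | hc
  · have e1 : Equiv.swap A B (w.right j) = B := by rw [hc, Equiv.swap_apply_left]
    have e2 : vfun w j = if w.left (w.right j) = 1 then ((i : ℤ) - 1 + 1)
        else -((i : ℤ) - 1 + 1) := by
      unfold vfun
      rw [hc]
      have : ((A : ℕ) : ℤ) = (i : ℤ) - 1 := by rw [hA]; simp; omega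
      rw [this]
    unfold vfun at *
    simp only [Function.comp_apply]
    rw [hl1, hr1, e1, e2]
    have hii : (i : ℤ) - 1 + 1 = (i : ℤ) := by ring
    rw [hii]
    have hBv : ((B : ℕ) : ℤ) = (i : ℤ) := by norm_num [hB]
    split_ifs
    · rw [fswap_eval_1, hBv]
    · rw [fswap_eval_3 i h1, hBv]
  · rcases eq_or_ne (w.right j) B with hc2 | hc2
    · have e1 : Equiv.swap A B (w.right j) = A := by rw [hc2, Equiv.swap_apply_right]
      unfold vfun
      simp only [Function.comp_apply]
      rw [hl1, hr1, e1]
      have eB : ((w.right j : ℕ) : ℤ) + 1 = (i : ℤ) + 1 := by rw [hc2]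
      rw [eB]
      have eA : ((A : ℕ) : ℤ) + 1 = (i : ℤ) := by simp [hA]; omega
      split_ifs
      · rw [fswap_eval_2, eA]
      · rw [fswap_eval_4 i h1, eA]
    · have e1 : Equiv.swap A B (w.right j) = w.right j := by
        rw [Equiv.swap_apply_of_ne_of_ne hc hc2]
      unfold vfun
      simp only [Function.comp_apply]
      rw [hl1, hr1, e1]
      have hAv : (A : ℕ) = i - 1 := rfl
      have hBv : (B : ℕ) = i := rfl
      have hna : ¬ ((w.right j : ℕ) + 1 = i) ∧ ¬ ((w.right j : ℕ) + 1 = i + 1) := by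
        constructor
        · intro hcc
          exact hc (Fin.ext (by omega))
        · intro hcc
          exact hc2 (Fin.ext (by omega))
      split_ifs
      · rw [fswap_fix i _ (by omega) (by omega)]
      · rw [fswap_fix i _ (by simp; omega) (by simp; omega)]

lemma vfun_mul_t0 (hr : 0 < r) (w : WB r) :
    vfun (w * tB r 0) = Function.update (vfun w) ⟨0, hr⟩ (-(vfun w ⟨0, hr⟩)) := by
  funext j
  have hr1 : (w * tB r 0).right = w.right := by
    rw [tB_eq 0 hr, SemidirectProduct.mul_right, mul_one]
  have hl1 : ∀ x, (w * tB r 0).left x = w.left x * eVec r ⟨0, hr⟩ (w.right.symm x) := by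
    intro x
    rw [tB_eq 0 hr, SemidirectProduct.mul_left]
    rfl
  by_cases hj : j = ⟨0, hr⟩
  · subst hj
    rw [Function.update_self]
    unfold vfun
    rw [hr1, hl1]
    have e1 : w.right.symm (w.right ⟨0, hr⟩) = ⟨0, hr⟩ := Equiv.symm_apply_apply _ _
    rw [e1]
    have e2 : eVec r ⟨0, hr⟩ ⟨0, hr⟩ = Multiplicative.ofAdd 1 := by rw [eVec, if_pos rfl]
    rw [e2]
    rcases mz_cases (w.left (w.right ⟨0, hr⟩)) with hc | hc <;> rw [hc]
    · rw [if_neg (by decide), if_pos rfl]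
    · rw [if_pos (by decide), if_neg (by decide), neg_neg]
  · rw [Function.update_of_ne hj]
    unfold vfun
    rw [hr1, hl1]
    have e1 : w.right.symm (w.right j) = j := Equiv.symm_apply_apply _ _
    rw [e1]
    have e2 : eVec r ⟨0, hr⟩ j = 1 := by rw [eVec, if_neg hj]
    rw [e2, mul_one]

lemma vfun_mul_s (i : ℕ) (h1 : 1 ≤ i) (h2 : i < r) (w : WB r) :
    vfun (w * sB r i) = vfun w ∘ Equiv.swap ⟨i - 1, by omega⟩ ⟨i, h2⟩ := by
  funext j
  set τ := Equiv.swap (⟨i - 1, by omega⟩ : Fin r) ⟨i, h2⟩ with hτ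
  have hr1 : (w * sB r i).right j = w.right (τ j) := by
    rw [sB_eq i h1 h2, SemidirectProduct.mul_right]
    rfl
  have hl1 : (w * sB r i).left = w.left := by
    rw [sB_eq i h1 h2, SemidirectProduct.mul_left, map_one, mul_one]
  unfold vfun
  rw [hr1, hl1, Function.comp_apply]

lemma vfun_one (j : Fin r) : vfun (1 : WB r) j = ((j : ℕ) : ℤ) + 1 := by
  unfold vfun
  rw [SemidirectProduct.one_right, SemidirectProduct.one_left]
  rfl

lemma LL_vfun_one : LL (vfun (1 : WB r)) = 0 := by
  have h1 : invC (vfun (1 : WB r)) = 0 := by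
    rw [invC, Finset.card_eq_zero, Finset.filter_eq_empty_iff]
    rintro x -
    rw [vfun_one, vfun_one]
    intro hc
    have := hc.1
    rw [Fin.lt_def] at this
    omega
  have h2 : nsC (vfun (1 : WB r)) = 0 := by
    rw [nsC]
    apply Finset.sum_eq_zero
    intro j _
    rw [vfun_one, if_neg (by omega)]
  rw [LL, h1, h2]

/-! ### generators square to one -/

lemma semi_one : ((⟨1, 1⟩ : WB r) : WB r) = 1 := rfl

lemma tB_sq (i : ℕ) : tB r i * tB r i = (1 : WB r) := by
  by_cases h : i < r
  · rw [tB_eq i h]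
    apply SemidirectProduct.ext
    · rw [SemidirectProduct.mul_left, SemidirectProduct.one_left]
      simp only [map_one]
      funext x
      exact mz_sq _
    · rw [SemidirectProduct.mul_right, SemidirectProduct.one_right, one_mul]
  · rw [tB, dif_neg h, one_mul]

lemma sB_sq (i : ℕ) : sB r i * sB r i = (1 : WB r) := by
  by_cases h : 0 < i ∧ i < r
  · rw [sB_eq i h.1 h.2]
    apply SemidirectProduct.ext
    · rw [SemidirectProduct.mul_left, SemidirectProduct.one_left, one_mul, map_one]
    · rw [SemidirectProduct.mul_right, SemidirectProduct.one_right,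
        Equiv.swap_mul_self]
  · rw [sB, dif_neg h, one_mul]

lemma genS_sq {g : WB r} (hg : g ∈ genS r) : g * g = 1 := by
  rcases hg with hg | ⟨i, _, _, rfl⟩
  · rw [Set.mem_singleton_iff] at hg
    rw [hg]; exact tB_sq 0
  · exact sB_sq i

/-! ### `len = LL ∘ vfun` -/

lemma LL_le_length (hr : 0 < r) (l : List (WB r)) (hl : ∀ x ∈ l, x ∈ genS r) :
    LL (vfun l.prod) ≤ l.length := by
  induction l with
  | nil => simp only [List.prod_nil, List.length_nil, LL_vfun_one, le_refl]
  | cons g t ih =>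
    rw [List.prod_cons]
    have hg := hl g (List.mem_cons_self)
    have ht : ∀ x ∈ t, x ∈ genS r := fun x hx => hl x (List.mem_cons_of_mem g hx)
    have step : LL (vfun (g * t.prod)) ≤ LL (vfun t.prod) + 1 := by
      rcases hg with hg | ⟨i, hi1, hi2, rfl⟩
      · rw [Set.mem_singleton_iff] at hg
        subst hg
        rw [vfun_tmul 0 hr]
        apply LL_flip_le (SP_vfun _)
        rw [natAbs_vfun, Equiv.Perm.inv_def, Equiv.apply_symm_apply]
      · rw [vfun_smul i hi1 hi2]
        apply LL_swapval (SP_vfun _) i hi1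
          ((t.prod.right)⁻¹ ⟨i - 1, by omega⟩) ((t.prod.right)⁻¹ ⟨i, hi2⟩)
        · rw [natAbs_vfun, Equiv.Perm.inv_def, Equiv.apply_symm_apply]
          show i - 1 + 1 = i
          omega
        · rw [natAbs_vfun, Equiv.Perm.inv_def, Equiv.apply_symm_apply]
    rw [List.length_cons]
    have := ih ht
    omega

lemma vfun_pos_all (hr : 0 < r) (w : WB r)
    (hmon : ∀ k : ℕ, ∀ h : k + 1 < r, vfun w ⟨k, by omega⟩ < vfun w ⟨k + 1, h⟩)
    (h0 : ¬ vfun w ⟨0, hr⟩ < 0) : ∀ k : ℕ, ∀ h : k < r, 0 < vfun w ⟨k, h⟩ := by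
  intro k
  induction k with
  | zero =>
    intro h
    have := (SP_vfun w).1 ⟨0, hr⟩
    omega
  | succ k ih =>
    intro h
    have h1 := ih (by omega)
    have h2 := hmon k h
    omega

lemma increasing_eq_one (hr : 0 < r) (w : WB r)
    (hmon : ∀ k : ℕ, ∀ h : k + 1 < r, vfun w ⟨k, by omega⟩ < vfun w ⟨k + 1, h⟩)
    (h0 : ¬ vfun w ⟨0, hr⟩ < 0) : w = 1 := by
  have hpos := vfun_pos_all hr w hmon h0
  -- the left component is trivial
  have hleft : ∀ x : Fin r, w.left x = 1 := by
    intro x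
    have hp := hpos ((w.right)⁻¹ x) ((w.right)⁻¹ x).isLt
    rw [Fin.eta] at hp
    unfold vfun at hp
    rw [Equiv.Perm.inv_def, Equiv.apply_symm_apply] at hp
    by_contra hne
    rw [if_neg hne] at hp
    omega
  -- the values are exactly the positions
  have hval : ∀ j : Fin r, vfun w j = ((w.right j : ℕ) : ℤ) + 1 := by
    intro j
    unfold vfun
    rw [if_pos (hleft _)]
  -- σ is monotone, hence σ j ≥ j
  have hge : ∀ k : ℕ, ∀ h : k < r, k ≤ (w.right ⟨k, h⟩ : ℕ) := by
    intro k
    induction k with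
    | zero => intro h; omega
    | succ k ih =>
      intro h
      have h1 := ih (by omega)
      have h2 := hmon k h
      rw [hval, hval] at h2
      omega
  -- sum argument : σ = id
  have hsum : ∑ j : Fin r, ((w.right j : ℕ)) = ∑ j : Fin r, (j : ℕ) :=
    Equiv.sum_comp w.right (fun j : Fin r => (j : ℕ))
  have hfix : ∀ j : Fin r, ((j : ℕ)) = ((w.right j : ℕ)) := by
    have hle : ∀ j ∈ (Finset.univ : Finset (Fin r)), (j : ℕ) ≤ ((w.right j : ℕ)) := by
      intro j _
      have := hge (j : ℕ) j.isLt
      rw [Fin.eta] at this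
      exact this
    intro j
    exact (Finset.sum_eq_sum_iff_of_le hle).mp hsum.symm j (Finset.mem_univ j)
  apply SemidirectProduct.ext
  · rw [SemidirectProduct.one_left]
    funext x
    exact hleft x
  · rw [SemidirectProduct.one_right]
    apply Equiv.ext
    intro j
    exact (Fin.ext (hfix j).symm)

lemma descent (hr : 0 < r) (w : WB r) (hw : w ≠ 1) :
    ∃ g ∈ genS r, LL (vfun (w * g)) + 1 ≤ LL (vfun w) := by
  by_cases hmon : ∀ k : ℕ, ∀ h : k + 1 < r, vfun w ⟨k, by omega⟩ < vfun w ⟨k + 1, h⟩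
  · by_cases hneg : vfun w ⟨0, hr⟩ < 0
    · refine ⟨tB r 0, Or.inl rfl, ?_⟩
      rw [vfun_mul_t0 hr]
      exact LL_flip_down (SP_vfun w) _ hneg
    · exact absurd (increasing_eq_one hr w hmon hneg) hw
  · push_neg at hmon
    obtain ⟨k, h, hk⟩ := hmon
    refine ⟨sB r (k + 1), Or.inr ⟨k + 1, by omega, h, rfl⟩, ?_⟩
    rw [vfun_mul_s (k + 1) (by omega) h]
    have hne : vfun w ⟨k + 1, h⟩ ≠ vfun w ⟨k, by omega⟩ := by
      intro hc
      have h2 : (⟨k + 1, h⟩ : Fin r) = ⟨k, by omega⟩ := (SP_vfun w).2 (by simp only; rw [hc])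
      simp only [Fin.mk.injEq] at h2
      omega
    have hlt : vfun w ⟨k + 1, h⟩ < vfun w ⟨k, by omega⟩ := lt_of_le_of_ne hk hne
    have e : (⟨k + 1 - 1, by omega⟩ : Fin r) = ⟨k, by omega⟩ := by
      apply Fin.ext; simp
    rw [e]
    exact LL_swappos (vfun w) ⟨k, by omega⟩ ⟨k + 1, h⟩ rfl hlt

lemma exists_word (hr : 0 < r) : ∀ n (w : WB r), LL (vfun w) ≤ n →
    ∃ l : List (WB r), (∀ x ∈ l, x ∈ genS r) ∧ l.prod = w ∧ l.length ≤ LL (vfun w) := by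
  intro n
  induction n with
  | zero =>
    intro w hn
    by_cases hw : w = 1
    · exact ⟨[], by simp, by simp [hw], by simp⟩
    · obtain ⟨g, _, hdec⟩ := descent hr w hw
      omega
  | succ n ih =>
    intro w hn
    by_cases hw : w = 1
    · exact ⟨[], by simp, by simp [hw], by simp⟩
    · obtain ⟨g, hgS, hdec⟩ := descent hr w hw
      obtain ⟨l, hl1, hl2, hl3⟩ := ih (w * g) (by omega)
      refine ⟨l ++ [g], ?_, ?_, ?_⟩
      · intro x hx
        rcases List.mem_append.mp hx with hx | hx
        · exact hl1 x hx
        · rw [List.mem_singleton.mp hx]; exact hgS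
      · rw [List.prod_append, hl2, List.prod_singleton, mul_assoc, genS_sq hgS, mul_one]
      · rw [List.length_append, List.length_singleton]
        omega

lemma len_eq (hr : 0 < r) (w : WB r) : len r w = LL (vfun w) := by
  obtain ⟨l, hl1, hl2, hl3⟩ := exists_word hr (LL (vfun w)) w le_rfl
  have hub : len r w ≤ LL (vfun w) := by
    have hmem : l.length ∈ {n | ∃ l : List (WB r),
        (∀ x ∈ l, x ∈ genS r) ∧ l.length = n ∧ l.prod = w} := ⟨l, hl1, rfl, hl2⟩
    exact le_trans (Nat.sInf_le hmem) hl3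
  have hlb : LL (vfun w) ≤ len r w := by
    have hne : {n | ∃ l : List (WB r),
        (∀ x ∈ l, x ∈ genS r) ∧ l.length = n ∧ l.prod = w}.Nonempty :=
      ⟨l.length, l, hl1, rfl, hl2⟩
    obtain ⟨l0, h01, h02, h03⟩ := Nat.sInf_mem hne
    calc LL (vfun w) = LL (vfun l0.prod) := by rw [h03]
      _ ≤ l0.length := LL_le_length hr l0 h01
      _ = len r w := h02
  omega

/-! ### characterization of `Comega` and `Dright` -/

def CGsub (r k : ℕ) : Subgroup (WB r) where
  carrier := {w | w.right = 1 ∧ ∀ i : Fin r, k ≤ (i : ℕ) → w.left i = 1}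
  one_mem' := ⟨rfl, fun _ _ => rfl⟩
  mul_mem' := by
    rintro x y ⟨hx1, hx2⟩ ⟨hy1, hy2⟩
    constructor
    · rw [SemidirectProduct.mul_right, hx1, hy1, one_mul]
    · intro i hi
      rw [SemidirectProduct.mul_left, Pi.mul_apply, hx2 i hi, one_mul, hx1, map_one]
      exact hy2 i hi
  inv_mem' := by
    rintro x ⟨hx1, hx2⟩
    constructor
    · rw [SemidirectProduct.inv_right, hx1, inv_one]
    · intro i hi
      rw [SemidirectProduct.inv_left, hx1, inv_one, map_one]
      show x.left⁻¹ i = 1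
      rw [Pi.inv_apply, hx2 i hi, inv_one]

lemma mem_CGsub {k : ℕ} {w : WB r} :
    w ∈ CGsub r k ↔ w.right = 1 ∧ ∀ i : Fin r, k ≤ (i : ℕ) → w.left i = 1 :=
  ⟨fun h => h, fun h => h⟩

lemma Comega_le_CGsub (k : ℕ) : Comega r k ≤ CGsub r k := by
  rw [Comega, Subgroup.closure_le]
  rintro w ⟨i, hik, rfl⟩
  rw [SetLike.mem_coe]
  by_cases hir : i < r
  · rw [tB_eq i hir, mem_CGsub]
    constructor
    · rfl
    · intro x hx
      show eVec r ⟨i, hir⟩ x = 1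
      rw [eVec, if_neg]
      intro hc
      rw [hc] at hx
      have : ((⟨i, hir⟩ : Fin r) : ℕ) = i := rfl
      omega
  · rw [tB, dif_neg hir]
    exact one_mem _

lemma supp_mem_Comega (k : ℕ) : ∀ n (x : NB r),
    (Finset.univ.filter fun i => x i ≠ 1).card ≤ n →
    (∀ i : Fin r, k ≤ (i : ℕ) → x i = 1) →
    (⟨x, 1⟩ : WB r) ∈ Comega r k := by
  intro n
  induction n with
  | zero =>
    intro x hc hx
    have hone : x = 1 := by
      funext i
      by_contra hne
      have : i ∈ Finset.univ.filter fun i => x i ≠ 1 := by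
        simp only [Finset.mem_filter, Finset.mem_univ, true_and]
        exact hne
      have := Finset.card_pos.mpr ⟨i, this⟩
      omega
    rw [hone, semi_one]
    exact one_mem _
  | succ n ih =>
    intro x hc hx
    by_cases hone : x = 1
    · rw [hone, semi_one]; exact one_mem _
    · have hex : ∃ i, x i ≠ 1 := by
        by_contra hall
        push_neg at hall
        exact hone (funext hall)
      obtain ⟨i, hi⟩ := hex
      have hik : (i : ℕ) < k := by
        by_contra hge
        exact hi (hx i (by omega))
      have hdec : (⟨x, 1⟩ : WB r) = tB r (i : ℕ) * ⟨Function.update x i 1, 1⟩ := by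
        rw [tB_eq (i : ℕ) i.isLt]
        apply SemidirectProduct.ext
        · rw [SemidirectProduct.mul_left]
          simp only [map_one]
          show x = eVec r ⟨(i : ℕ), i.isLt⟩ * Function.update x i 1
          funext j
          rw [Pi.mul_apply, eVec, Fin.eta]
          by_cases hj : j = i
          · subst hj
            rw [if_pos rfl, Function.update_self]
            rcases mz_cases (x j) with hc1 | hc1
            · exact absurd hc1 hi
            · rw [hc1, mul_one]
          · rw [if_neg hj, Function.update_of_ne hj, one_mul]
        · rw [SemidirectProduct.mul_right, mul_one]
      rw [hdec]
      apply mul_mem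
      · exact Subgroup.subset_closure ⟨(i : ℕ), hik, rfl⟩
      · apply ih
        · have hupd : (Finset.univ.filter fun j => Function.update x i 1 j ≠ 1)
              = (Finset.univ.filter fun j => x j ≠ 1).erase i := by
            ext j
            simp only [Finset.mem_filter, Finset.mem_univ, true_and, Finset.mem_erase]
            by_cases hj : j = i
            · subst hj
              rw [Function.update_self]
              simp
            · rw [Function.update_of_ne hj]
              simp [hj]
          have hmem : i ∈ Finset.univ.filter fun j => x j ≠ 1 := by
            simp only [Finset.mem_filter, Finset.mem_univ, true_and]; exact hi
          rw [hupd, Finset.card_erase_of_mem hmem]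
          have := Finset.card_pos.mpr ⟨i, hmem⟩
          omega
        · intro j hj
          by_cases hji : j = i
          · subst hji; rw [Function.update_self]
          · rw [Function.update_of_ne hji]; exact hx j hj

lemma LL_lt_t_mul (i : Fin r) (u : WB r) (h : u.left i = 1) :
    LL (vfun u) + 1 ≤ LL (vfun (tB r (i : ℕ) * u)) := by
  have := vfun_tmul (i : ℕ) i.isLt u
  rw [Fin.eta] at this
  rw [this]
  apply LL_flip_up (SP_vfun u)
  unfold vfun
  rw [Equiv.Perm.inv_def, Equiv.apply_symm_apply, if_pos h]
  positivity

lemma LL_t_mul_lt (i : Fin r) (u : WB r) (h : u.left i ≠ 1) :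
    LL (vfun (tB r (i : ℕ) * u)) + 1 ≤ LL (vfun u) := by
  have h2 : (tB r (i : ℕ) * u).left i = 1 := by
    rw [tB_mul_left (i : ℕ) i.isLt, Fin.eta, eVec, if_pos rfl]
    rcases mz_cases (u.left i) with hc | hc
    · exact absurd hc h
    · rw [hc]; decide
  have h3 := LL_lt_t_mul i _ h2
  rw [← mul_assoc, tB_sq, one_mul] at h3
  exact h3

lemma LL_le_supp_mul (d : WB r) : ∀ n (x : NB r),
    (Finset.univ.filter fun i => x i ≠ 1).card ≤ n →
    (∀ i : Fin r, x i ≠ 1 → d.left i = 1) →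
    LL (vfun d) ≤ LL (vfun ((⟨x, 1⟩ : WB r) * d)) := by
  intro n
  induction n with
  | zero =>
    intro x hc hx
    have hone : x = 1 := by
      funext i
      by_contra hne
      have : i ∈ Finset.univ.filter fun i => x i ≠ 1 := by
        simp only [Finset.mem_filter, Finset.mem_univ, true_and]; exact hne
      have := Finset.card_pos.mpr ⟨i, this⟩
      omega
    rw [hone, semi_one, one_mul]
  | succ n ih =>
    intro x hc hx
    by_cases hone : x = 1
    · rw [hone, semi_one, one_mul]
    · have hex : ∃ i, x i ≠ 1 := by
        by_contra hall
        push_neg at hall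
        exact hone (funext hall)
      obtain ⟨i, hi⟩ := hex
      have hdec : (⟨x, 1⟩ : WB r) = tB r (i : ℕ) * ⟨Function.update x i 1, 1⟩ := by
        rw [tB_eq (i : ℕ) i.isLt]
        apply SemidirectProduct.ext
        · rw [SemidirectProduct.mul_left]
          simp only [map_one]
          show x = eVec r ⟨(i : ℕ), i.isLt⟩ * Function.update x i 1
          funext j
          rw [Pi.mul_apply, eVec, Fin.eta]
          by_cases hj : j = i
          · subst hj
            rw [if_pos rfl, Function.update_self]
            rcases mz_cases (x j) with hc1 | hc1
            · exact absurd hc1 hi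
            · rw [hc1, mul_one]
          · rw [if_neg hj, Function.update_of_ne hj, one_mul]
        · rw [SemidirectProduct.mul_right, mul_one]
      have hupd : (Finset.univ.filter fun j => Function.update x i 1 j ≠ 1)
          = (Finset.univ.filter fun j => x j ≠ 1).erase i := by
        ext j
        simp only [Finset.mem_filter, Finset.mem_univ, true_and, Finset.mem_erase]
        by_cases hj : j = i
        · subst hj
          rw [Function.update_self]
          simp
        · rw [Function.update_of_ne hj]
          simp [hj]
      have hmem : i ∈ Finset.univ.filter fun j => x j ≠ 1 := by
        simp only [Finset.mem_filter, Finset.mem_univ, true_and]; exact hi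
      have hx' : ∀ j : Fin r, Function.update x i 1 j ≠ 1 → d.left j = 1 := by
        intro j hj
        by_cases hji : j = i
        · subst hji; rw [Function.update_self] at hj; exact absurd rfl hj
        · rw [Function.update_of_ne hji] at hj; exact hx j hj
      have step1 : LL (vfun d) ≤ LL (vfun ((⟨Function.update x i 1, 1⟩ : WB r) * d)) := by
        apply ih
        · rw [hupd, Finset.card_erase_of_mem hmem]
          have := Finset.card_pos.mpr ⟨i, hmem⟩
          omega
        · exact hx'
      have hu : ((⟨Function.update x i 1, 1⟩ : WB r) * d).left i = 1 := by
        rw [SemidirectProduct.mul_left]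
        show Function.update x i 1 i * d.left i = 1
        rw [Function.update_self, one_mul]
        exact hx i hi
      have step2 := LL_lt_t_mul i _ hu
      rw [hdec, mul_assoc]
      omega

lemma mem_Dright_iff (hr : 0 < r) (k : ℕ) (d : WB r) :
    d ∈ Dright r k ↔ ∀ i : Fin r, (i : ℕ) < k → d.left i = 1 := by
  constructor
  · intro hD i hik
    by_contra hne
    have hmem : tB r (i : ℕ) ∈ Comega r k := Subgroup.subset_closure ⟨(i : ℕ), hik, rfl⟩
    have := hD (tB r (i : ℕ)) hmem
    rw [len_eq hr, len_eq hr] at this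
    have := LL_t_mul_lt i d hne
    omega
  · intro hvan w hw
    rw [len_eq hr, len_eq hr]
    have hw' := Comega_le_CGsub k hw
    rw [mem_CGsub] at hw'
    obtain ⟨x, ρ⟩ := w
    have hρ : ρ = 1 := hw'.1
    subst hρ
    apply LL_le_supp_mul d _ x le_rfl
    intro i hi
    apply hvan
    by_contra hge
    exact hi (hw'.2 i (by omega))

lemma inv_left_apply (w : WB r) (i : Fin r) : (w⁻¹).left i = w.left (w.right i) := by
  rw [SemidirectProduct.inv_left, permAct_apply, Pi.inv_apply, mz_inv]
  congr 1

/-! ### group relations and coordinate evaluations -/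

lemma mk_mul_mk (x y : NB r) (σ ρ : Equiv.Perm (Fin r)) :
    (⟨x, σ⟩ : WB r) * ⟨y, ρ⟩ = ⟨x * permAct r σ y, σ * ρ⟩ := rfl

lemma eVec_same (p : Fin r) : eVec r p p = Multiplicative.ofAdd 1 := if_pos rfl

lemma eVec_ne {x p : Fin r} (hne : x ≠ p) : eVec r p x = 1 := if_neg hne

lemma permAct_swap_eVec (p q : Fin r) :
    permAct r (Equiv.swap p q) (eVec r p) = eVec r q := by
  funext x
  rw [permAct_apply, Equiv.symm_swap]
  by_cases hx : x = q
  · subst hx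
    rw [Equiv.swap_apply_right, eVec_same, eVec_same]
  · rw [eVec_ne hx, eVec_ne]
    intro hc
    apply hx
    have := congrArg (Equiv.swap p q) hc
    rwa [Equiv.swap_apply_self, Equiv.swap_apply_left] at this

lemma permAct_swap_eVec' (p q : Fin r) :
    permAct r (Equiv.swap p q) (eVec r q) = eVec r p := by
  rw [Equiv.swap_comm]
  exact permAct_swap_eVec q p

lemma s_mul_tA (a : ℕ) (ha1 : 1 ≤ a) (har : a < r) (har1 : a - 1 < r) :
    sB r a * tB r (a - 1) = tB r a * sB r a := by
  rw [sB_eq a ha1 har, tB_eq _ har1, tB_eq a har, mk_mul_mk, mk_mul_mk]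
  apply SemidirectProduct.ext
  · show 1 * permAct r (Equiv.swap ⟨a - 1, by omega⟩ ⟨a, har⟩) (eVec r ⟨a - 1, har1⟩)
      = eVec r ⟨a, har⟩ * permAct r 1 1
    rw [one_mul, map_one, mul_one]
    exact permAct_swap_eVec _ _
  · show Equiv.swap (⟨a - 1, by omega⟩ : Fin r) ⟨a, har⟩ * 1
      = 1 * Equiv.swap (⟨a - 1, by omega⟩ : Fin r) ⟨a, har⟩
    rw [mul_one, one_mul]

lemma s_mul_tB (a : ℕ) (ha1 : 1 ≤ a) (har : a < r) (har1 : a - 1 < r) :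
    sB r a * tB r a = tB r (a - 1) * sB r a := by
  rw [sB_eq a ha1 har, tB_eq _ har1, tB_eq a har, mk_mul_mk, mk_mul_mk]
  apply SemidirectProduct.ext
  · show 1 * permAct r (Equiv.swap ⟨a - 1, by omega⟩ ⟨a, har⟩) (eVec r ⟨a, har⟩)
      = eVec r ⟨a - 1, har1⟩ * permAct r 1 1
    rw [one_mul, map_one, mul_one]
    exact permAct_swap_eVec' _ _
  · show Equiv.swap (⟨a - 1, by omega⟩ : Fin r) ⟨a, har⟩ * 1
      = 1 * Equiv.swap (⟨a - 1, by omega⟩ : Fin r) ⟨a, har⟩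
    rw [mul_one, one_mul]

lemma t_comm (i j : ℕ) (hi : i < r) (hj : j < r) :
    tB r i * tB r j = tB r j * tB r i := by
  rw [tB_eq i hi, tB_eq j hj, mk_mul_mk, mk_mul_mk]
  apply SemidirectProduct.ext
  · show eVec r ⟨i, hi⟩ * permAct r 1 (eVec r ⟨j, hj⟩)
      = eVec r ⟨j, hj⟩ * permAct r 1 (eVec r ⟨i, hi⟩)
    rw [map_one, MulAut.one_apply, MulAut.one_apply]
    exact mul_comm _ _
  · rfl

lemma cancel_invol {G : Type*} [Group G] {u : G} (h : u * u = 1) (y : G) :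
    u * (u * y) = y := by rw [← mul_assoc, h, one_mul]

/-! ### the key transfer lemma : `sB r a` preserves `D0 r (a+1) b` -/

lemma sB_mem_D0 (a b : ℕ) (hr : 2 ≤ r) (ha1 : 1 ≤ a) (har : a < r) (d' : WB r)
    (hd' : d' ∈ D0 r (a + 1) b) : sB r a * d' ∈ D0 r (a + 1) b := by
  have hr0 : 0 < r := by omega
  have har1 : a - 1 < r := by omega
  set A : Fin r := ⟨a - 1, har1⟩ with hA
  set B : Fin r := ⟨a, har⟩ with hB
  have hswap : ∀ x : Fin r, (sB r a * d' : WB r).left x = d'.left (Equiv.swap A B x) :=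
    fun x => sB_mul_left a ha1 har d' x
  have hAB : A ≠ B := by
    intro hc
    rw [hA, hB, Fin.mk.injEq] at hc
    omega
  refine ⟨⟨?_, ?_⟩, ?_⟩
  · -- distinguished for C_{ω_{a+1}}
    apply (mem_Dright_iff hr0 (a + 1) _).mpr
    intro i hi
    rw [hswap i]
    apply (mem_Dright_iff hr0 (a + 1) d').mp hd'.1.1
    rcases eq_or_ne i A with hiA | hiA
    · rw [hiA, Equiv.swap_apply_left]
      show a < a + 1
      omega
    · rcases eq_or_ne i B with hiB | hiB
      · rw [hiB, Equiv.swap_apply_right]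
        show a - 1 < a + 1
        omega
      · rw [Equiv.swap_apply_of_ne_of_ne hiA hiB]
        exact hi
  · -- the inverse is distinguished for C_{ω_b}
    apply (mem_Dright_iff hr0 b _).mpr
    intro i hi
    rw [inv_left_apply, hswap, sB_mul_right a ha1 har]
    have e1 : (Equiv.swap A B * d'.right) i = Equiv.swap A B (d'.right i) := rfl
    rw [e1, Equiv.swap_apply_self]
    rw [← inv_left_apply]
    exact (mem_Dright_iff hr0 b d'⁻¹).mp hd'.1.2 i hi
  · -- trivial intersection
    intro x hx hconj
    have hx' := Comega_le_CGsub (a + 1) hx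
    rw [mem_CGsub] at hx'
    obtain ⟨y, ρ⟩ := x
    have hρ : ρ = 1 := hx'.1
    subst hρ
    have hSinv : (sB r a)⁻¹ = sB r a := inv_eq_of_mul_eq_one_left (sB_sq a)
    have hSxS : sB r a * (⟨y, 1⟩ : WB r) * sB r a
        = ⟨permAct r (Equiv.swap A B) y, 1⟩ := by
      rw [sB_eq a ha1 har, mk_mul_mk, mk_mul_mk]
      apply SemidirectProduct.ext
      · show 1 * permAct r (Equiv.swap ⟨a - 1, by omega⟩ ⟨a, har⟩) y
            * permAct r (Equiv.swap ⟨a - 1, by omega⟩ ⟨a, har⟩ * 1) 1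
          = permAct r (Equiv.swap A B) y
        rw [one_mul, map_one, mul_one]
      · show Equiv.swap (⟨a - 1, by omega⟩ : Fin r) ⟨a, har⟩ * 1
            * Equiv.swap (⟨a - 1, by omega⟩ : Fin r) ⟨a, har⟩ = 1
        rw [mul_one, Equiv.swap_mul_self]
    have hmem2 : (⟨permAct r (Equiv.swap A B) y, 1⟩ : WB r) ∈ Comega r (a + 1) := by
      apply supp_mem_Comega (a + 1)
        ((Finset.univ.filter fun i => permAct r (Equiv.swap A B) y i ≠ 1).card) _ le_rfl
      intro i hi2
      rw [permAct_apply, Equiv.symm_swap]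
      have hiA : i ≠ A := by
        intro hc
        rw [hc] at hi2
        have : (A : ℕ) = a - 1 := rfl
        omega
      have hiB : i ≠ B := by
        intro hc
        rw [hc] at hi2
        have : (B : ℕ) = a := rfl
        omega
      rw [Equiv.swap_apply_of_ne_of_ne hiA hiB]
      exact hx'.2 i hi2
    have hrw : (sB r a * d')⁻¹ * (⟨y, 1⟩ : WB r) * (sB r a * d')
        = d'⁻¹ * (⟨permAct r (Equiv.swap A B) y, 1⟩ : WB r) * d' := by
      rw [mul_inv_rev, hSinv, ← hSxS]
      group
    rw [hrw] at hconj
    have h1 := hd'.2 _ hmem2 hconj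
    have h2 : permAct r (Equiv.swap A B) y = 1 := by
      have := congrArg SemidirectProduct.left h1
      rwa [SemidirectProduct.one_left] at this
    have h3 : y = 1 := by
      apply (permAct r (Equiv.swap A B)).injective
      rw [h2, map_one]
    rw [h3, semi_one]

end
end Stmt6Aux

open Stmt6Aux in
/-- For `1 ≤ a ≤ r−1`, `0 ≤ b ≤ r`, with
`U = D⁰_{ω_{a+1},ω_b} ∪ t_{a+1}·D⁰_{ω_{a+1},ω_b}`, the set
`{1, t_a, s_a, s_a t_a}·(D⁰_{ω_a,ω_b} \ U)` is disjoint from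
`⋃_{ε₁,ε₂ ∈ {0,1}} t_a^{ε₁} t_{a+1}^{ε₂}·D⁰_{ω_{a+1},ω_b}`.
(In 0-indexed notation `t_a = tB r (a-1)`, `t_{a+1} = tB r a`, `s_a = sB r a`.) -/
theorem stmt6 (r a b : ℕ) (hr : 2 ≤ r) (ha1 : 1 ≤ a) (ha : a ≤ r - 1) (hb : b ≤ r) :
    (({1, tB r (a - 1), sB r a, sB r a * tB r (a - 1)} : Set (WB r)) *
        (D0 r a b \ (D0 r (a + 1) b ∪ tB r a • D0 r (a + 1) b))) ∩
      (⋃ e₁ ∈ ({0, 1} : Set ℕ), ⋃ e₂ ∈ ({0, 1} : Set ℕ),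
        (tB r (a - 1) ^ e₁ * tB r a ^ e₂) • D0 r (a + 1) b) = ∅ := by
  classical
  have hr0 : 0 < r := by omega
  have har : a < r := by omega
  have har1 : a - 1 < r := by omega
  rw [Set.eq_empty_iff_forall_notMem]
  rintro z ⟨hz1, hz2⟩
  rw [Set.mem_mul] at hz1
  obtain ⟨g, hg, d, hd, hgd⟩ := hz1
  simp only [Set.mem_iUnion, exists_prop] at hz2
  obtain ⟨e₁, he₁, e₂, he₂, hz2⟩ := hz2
  rw [Set.mem_smul_set] at hz2
  obtain ⟨d', hd', hzd'⟩ := hz2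
  rw [smul_eq_mul] at hzd'
  have hEq : g * d = tB r (a - 1) ^ e₁ * tB r a ^ e₂ * d' := by rw [hgd, ← hzd']
  simp only [Set.mem_insert_iff, Set.mem_singleton_iff] at hg he₁ he₂
  have hdU := hd.2
  have hK := sB_mem_D0 a b hr ha1 har d' hd'
  have relA : tB r (a - 1) * tB r (a - 1) = 1 := tB_sq (a - 1)
  have relS : sB r a * sB r a = 1 := sB_sq a
  have rel4 : sB r a * tB r (a - 1) = tB r a * sB r a := s_mul_tA a ha1 har har1
  have rel5 : sB r a * tB r a = tB r (a - 1) * sB r a := s_mul_tB a ha1 har har1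
  have rel6 : tB r (a - 1) * tB r a = tB r a * tB r (a - 1) := t_comm (a - 1) a har1 har
  have F1 : d.left ⟨a - 1, har1⟩ = 1 :=
    (mem_Dright_iff hr0 a d).mp hd.1.1.1 ⟨a - 1, har1⟩ (by show a - 1 < a; omega)
  have F2A : d'.left ⟨a - 1, har1⟩ = 1 :=
    (mem_Dright_iff hr0 (a + 1) d').mp hd'.1.1 ⟨a - 1, har1⟩ (by show a - 1 < a + 1; omega)
  have F2B : d'.left ⟨a, har⟩ = 1 :=
    (mem_Dright_iff hr0 (a + 1) d').mp hd'.1.1 ⟨a, har⟩ (by show a < a + 1; omega)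
  have lTA_A : ∀ y : WB r, (tB r (a - 1) * y).left ⟨a - 1, har1⟩
      = Multiplicative.ofAdd 1 * y.left ⟨a - 1, har1⟩ := by
    intro y; rw [tB_mul_left (a - 1) har1, eVec_same]
  have hne1 : (⟨a - 1, har1⟩ : Fin r) ≠ ⟨a, har⟩ := by
    intro hc; rw [Fin.mk.injEq] at hc; omega
  have hne2 : (⟨a, har⟩ : Fin r) ≠ ⟨a - 1, har1⟩ := by
    intro hc; rw [Fin.mk.injEq] at hc; omega
  have lTB_A : ∀ y : WB r, (tB r a * y).left ⟨a - 1, har1⟩ = y.left ⟨a - 1, har1⟩ := by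
    intro y
    rw [tB_mul_left a har, eVec_ne hne1, one_mul]
  have lTB_B : ∀ y : WB r, (tB r a * y).left ⟨a, har⟩
      = Multiplicative.ofAdd 1 * y.left ⟨a, har⟩ := by
    intro y; rw [tB_mul_left a har, eVec_same]
  have lTA_B : ∀ y : WB r, (tB r (a - 1) * y).left ⟨a, har⟩ = y.left ⟨a, har⟩ := by
    intro y
    rw [tB_mul_left (a - 1) har1, eVec_ne hne2, one_mul]
  have lS_A : ∀ y : WB r, (sB r a * y).left ⟨a - 1, har1⟩ = y.left ⟨a, har⟩ := by
    intro y
    rw [sB_mul_left a ha1 har, Equiv.swap_apply_left]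
  have lS_B : ∀ y : WB r, (sB r a * y).left ⟨a, har⟩ = y.left ⟨a - 1, har1⟩ := by
    intro y
    rw [sB_mul_left a ha1 har, Equiv.swap_apply_right]
  have U1 : ∀ y : WB r, y ∈ D0 r (a + 1) b → d = y → False := by
    intro y hy hdy
    exact hdU (Set.mem_union_left _ (hdy ▸ hy))
  have U2 : ∀ y : WB r, y ∈ D0 r (a + 1) b → d = tB r a * y → False := by
    intro y hy hdy
    exact hdU (Set.mem_union_right _ (Set.mem_smul_set.mpr ⟨y, hy, by rw [smul_eq_mul, ← hdy]⟩))
  rcases he₁ with rfl | rfl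
  · rcases he₂ with rfl | rfl
    · -- e₁ = 0, e₂ = 0
      simp only [pow_zero, one_mul] at hEq
      rcases hg with rfl | rfl | rfl | rfl
      · rw [one_mul] at hEq
        exact U1 d' hd' hEq
      · have hd_eq : d = tB r (a - 1) * d' := by rw [← hEq, cancel_invol relA]
        have hF := F1
        rw [hd_eq, lTA_A, F2A] at hF
        exact absurd hF (by decide)
      · have hd_eq : d = sB r a * d' := by rw [← hEq, cancel_invol relS]
        exact U1 _ hK hd_eq
      · rw [mul_assoc] at hEq
        have h1 : tB r (a - 1) * d = sB r a * d' := by rw [← hEq, cancel_invol relS]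
        have hd_eq : d = tB r (a - 1) * (sB r a * d') := by rw [← h1, cancel_invol relA]
        have hF := F1
        rw [hd_eq, lTA_A, lS_A, F2B] at hF
        exact absurd hF (by decide)
    · -- e₁ = 0, e₂ = 1
      simp only [pow_zero, pow_one, one_mul] at hEq
      rcases hg with rfl | rfl | rfl | rfl
      · rw [one_mul] at hEq
        exact U2 d' hd' hEq
      · have hd_eq : d = tB r (a - 1) * (tB r a * d') := by
          rw [← hEq, cancel_invol relA]
        have hF := F1
        rw [hd_eq, lTA_A, lTB_A, F2A] at hF
        exact absurd hF (by decide)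
      · have hd_eq : d = sB r a * (tB r a * d') := by rw [← hEq, cancel_invol relS]
        have hF := F1
        rw [hd_eq, lS_A, lTB_B, F2B] at hF
        exact absurd hF (by decide)
      · rw [mul_assoc] at hEq
        have h1 : tB r (a - 1) * d = sB r a * (tB r a * d') := by
          rw [← hEq, cancel_invol relS]
        have hd_eq : d = tB r (a - 1) * (sB r a * (tB r a * d')) := by
          rw [← h1, cancel_invol relA]
        have h2 : sB r a * (tB r a * d') = tB r (a - 1) * (sB r a * d') := by
          rw [← mul_assoc, rel5, mul_assoc]
        rw [h2, cancel_invol relA] at hd_eq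
        exact U1 _ hK hd_eq
  · rcases he₂ with rfl | rfl
    · -- e₁ = 1, e₂ = 0
      simp only [pow_zero, pow_one, mul_one] at hEq
      rcases hg with rfl | rfl | rfl | rfl
      · rw [one_mul] at hEq
        have hF := F1
        rw [hEq, lTA_A, F2A] at hF
        exact absurd hF (by decide)
      · exact U1 d' hd' (mul_left_cancel hEq)
      · have hd_eq : d = sB r a * (tB r (a - 1) * d') := by
          rw [← hEq, cancel_invol relS]
        have h2 : sB r a * (tB r (a - 1) * d') = tB r a * (sB r a * d') := by
          rw [← mul_assoc, rel4, mul_assoc]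
        rw [h2] at hd_eq
        exact U2 _ hK hd_eq
      · rw [mul_assoc] at hEq
        have h1 : tB r (a - 1) * d = sB r a * (tB r (a - 1) * d') := by
          rw [← hEq, cancel_invol relS]
        have hd_eq : d = tB r (a - 1) * (sB r a * (tB r (a - 1) * d')) := by
          rw [← h1, cancel_invol relA]
        have hF := F1
        rw [hd_eq, lTA_A, lS_A, lTA_B, F2B] at hF
        exact absurd hF (by decide)
    · -- e₁ = 1, e₂ = 1
      simp only [pow_one] at hEq
      rw [mul_assoc] at hEq
      rcases hg with rfl | rfl | rfl | rfl
      · rw [one_mul] at hEq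
        have hF := F1
        rw [hEq, lTA_A, lTB_A, F2A] at hF
        exact absurd hF (by decide)
      · exact U2 d' hd' (mul_left_cancel hEq)
      · have hd_eq : d = sB r a * (tB r (a - 1) * (tB r a * d')) := by
          rw [← hEq, cancel_invol relS]
        have hF := F1
        rw [hd_eq, lS_A, lTA_B, lTB_B, F2B] at hF
        exact absurd hF (by decide)
      · rw [mul_assoc] at hEq
        have h1 : tB r (a - 1) * d = sB r a * (tB r (a - 1) * (tB r a * d')) := by
          rw [← hEq, cancel_invol relS]
        have h2 : sB r a * (tB r (a - 1) * (tB r a * d'))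
            = tB r a * (sB r a * (tB r a * d')) := by
          rw [← mul_assoc, rel4, mul_assoc]
        have h3 : sB r a * (tB r a * d') = tB r (a - 1) * (sB r a * d') := by
          rw [← mul_assoc, rel5, mul_assoc]
        rw [h2, h3] at h1
        have h4 : tB r a * (tB r (a - 1) * (sB r a * d'))
            = tB r (a - 1) * (tB r a * (sB r a * d')) := by
          rw [← mul_assoc, ← rel6, mul_assoc]
        rw [h4] at h1
        exact U2 _ hK (mul_left_cancel h1)
end

section
/- For all integers a, b with 1 ≤ a ≤ r−1 and 0 ≤ b ≤ r: D⁰_{ω_{a+1},ω_b} ∪ t_{a+1}·D⁰_{ω_{a+1},ω_b} = {x ∈ D⁰_{ω_a,ω_b} : x⁻¹ C_{ω_{a+1}} x ∩ C_{ω_b} = {1}}. -/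
open SemidirectProduct

open Pointwise

theorem Equiv.Perm.inv_apply_self {α : Type*} (f : Equiv.Perm α) (x : α) : f⁻¹ (f x) = x :=
  f.symm_apply_apply x

theorem Equiv.Perm.apply_inv_self {α : Type*} (f : Equiv.Perm α) (x : α) : f (f⁻¹ x) = x :=
  f.apply_symm_apply x

namespace Stmt7Aux
open Finset
variable {r : ℕ}

lemma two_cases (x : Multiplicative (ZMod 2)) : x = 1 ∨ x = Multiplicative.ofAdd 1 := by
  revert x; decide

lemma bad_ne_one : (Multiplicative.ofAdd (1 : ZMod 2)) ≠ 1 := by decide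

lemma bad_mul_bad : (Multiplicative.ofAdd (1 : ZMod 2)) * (Multiplicative.ofAdd 1) = 1 := by decide

/-- window -/
def win (w : WB r) (i : Fin r) : ℤ :=
  if w.left (w.right i) = 1 then ((w.right i : ℕ) + 1 : ℤ) else -((w.right i : ℕ) + 1 : ℤ)

def invF (A : Fin r → ℤ) : ℕ :=
  (Finset.univ.filter fun p : Fin r × Fin r => p.1 < p.2 ∧ A p.2 < A p.1).card

def negF (w : WB r) : ℕ := ∑ j : Fin r, if w.left j = 1 then 0 else (j : ℕ) + 1

def LF (w : WB r) : ℕ := invF (win w) + negF w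

lemma win_natAbs (w : WB r) (i : Fin r) : (win w i).natAbs = (w.right i : ℕ) + 1 := by
  unfold win; split <;> omega

lemma win_eq_or (w : WB r) (i : Fin r) :
    win w i = ((w.right i : ℕ) + 1 : ℤ) ∨ win w i = -((w.right i : ℕ) + 1 : ℤ) := by
  unfold win; split <;> simp

lemma right_ne (w : WB r) {p q : Fin r} (h : p ≠ q) : w.right p ≠ w.right q :=
  fun hc => h (w.right.injective hc)

/-- generic inversion-count comparison -/
lemma invF_le (A B : Fin r → ℤ) (D : Finset (Fin r × Fin r))
    (h : ∀ p : Fin r × Fin r, p.1 < p.2 → p ∉ D → (B p.2 < B p.1 ↔ A p.2 < A p.1)) :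
    invF B ≤ invF A + D.card := by
  unfold invF
  calc (Finset.univ.filter fun p : Fin r × Fin r => p.1 < p.2 ∧ B p.2 < B p.1).card
      ≤ ((Finset.univ.filter fun p : Fin r × Fin r => p.1 < p.2 ∧ A p.2 < A p.1) ∪ D).card := by
        apply Finset.card_le_card
        intro p hp
        simp only [Finset.mem_filter, Finset.mem_univ, true_and] at hp
        by_cases hD : p ∈ D
        · exact Finset.mem_union_right _ hD
        · exact Finset.mem_union_left _ (by
            simp only [Finset.mem_filter, Finset.mem_univ, true_and]
            exact ⟨hp.1, (h p hp.1 hD).mp hp.2⟩)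
    _ ≤ _ := Finset.card_union_le _ _

lemma invF_eq (A B : Fin r → ℤ)
    (h : ∀ p : Fin r × Fin r, p.1 < p.2 → (B p.2 < B p.1 ↔ A p.2 < A p.1)) :
    invF B = invF A := by
  have h1 := invF_le A B ∅ (fun p hp _ => h p hp)
  have h2 := invF_le B A ∅ (fun p hp _ => (h p hp).symm)
  simp at h1 h2; omega

lemma invF_succ_eq (A B : Fin r → ℤ) (q : Fin r × Fin r) (hq : q.1 < q.2)
    (hqA : A q.2 < A q.1) (hqB : ¬ B q.2 < B q.1)
    (h : ∀ p : Fin r × Fin r, p.1 < p.2 → p ≠ q → (B p.2 < B p.1 ↔ A p.2 < A p.1)) :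
    invF B + 1 = invF A := by
  unfold invF
  have hset : (Finset.univ.filter fun p : Fin r × Fin r => p.1 < p.2 ∧ B p.2 < B p.1)
      = (Finset.univ.filter fun p : Fin r × Fin r => p.1 < p.2 ∧ A p.2 < A p.1).erase q := by
    ext p
    simp only [Finset.mem_filter, Finset.mem_univ, true_and, Finset.mem_erase]
    constructor
    · intro ⟨h1, h2⟩
      have hpq : p ≠ q := fun e => hqB (e ▸ h2)
      exact ⟨hpq, h1, (h p h1 hpq).mp h2⟩
    · intro ⟨hpq, h1, h2⟩
      exact ⟨h1, (h p h1 hpq).mpr h2⟩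
  rw [hset, Finset.card_erase_of_mem]
  · have : q ∈ (Finset.univ.filter fun p : Fin r × Fin r => p.1 < p.2 ∧ A p.2 < A p.1) := by
      simp [hq, hqA]
    have hpos : 0 < (Finset.univ.filter fun p : Fin r × Fin r => p.1 < p.2 ∧ A p.2 < A p.1).card :=
      Finset.card_pos.mpr ⟨q, this⟩
    omega
  · simp [hq, hqA]

end Stmt7Aux
namespace Stmt7Aux
open Finset
variable {r : ℕ}

lemma flip_right (γ : NB r) (w : WB r) : ((⟨γ, 1⟩ : WB r) * w).right = w.right := by
  simp [SemidirectProduct.mul_right]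

lemma flip_left (γ : NB r) (w : WB r) : ((⟨γ, 1⟩ : WB r) * w).left = γ * w.left := by
  simp [SemidirectProduct.mul_left]

lemma win_flip (γ : NB r) (w : WB r) (i : Fin r) :
    win ((⟨γ, 1⟩ : WB r) * w) i = if γ (w.right i) = 1 then win w i else -win w i := by
  unfold win
  rw [flip_right, flip_left]
  rcases two_cases (γ (w.right i)) with h | h <;>
    rcases two_cases (w.left (w.right i)) with h2 | h2 <;>
      simp [h, h2, Pi.mul_apply, bad_ne_one, bad_mul_bad]

/-- support of γ -/
def supp (γ : NB r) : Finset (Fin r) := Finset.univ.filter fun j => γ j ≠ 1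

lemma negF_flip_of_good (γ : NB r) (w : WB r) (hs : ∀ j, γ j ≠ 1 → w.left j = 1) :
    negF ((⟨γ, 1⟩ : WB r) * w) = negF w + ∑ j ∈ supp γ, ((j : ℕ) + 1) := by
  unfold negF
  rw [flip_left]
  have : ∀ j : Fin r, (if (γ * w.left) j = 1 then 0 else (j : ℕ) + 1)
      = (if w.left j = 1 then 0 else (j : ℕ) + 1) + (if γ j = 1 then 0 else (j : ℕ) + 1) := by
    intro j
    rcases two_cases (γ j) with h | h
    · simp [h, Pi.mul_apply]
    · have hw := hs j (h ▸ bad_ne_one)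
      simp [h, hw, Pi.mul_apply, bad_ne_one]
  rw [Finset.sum_congr rfl (fun j _ => this j), Finset.sum_add_distrib]
  congr 1
  rw [supp, Finset.sum_filter]
  apply Finset.sum_congr rfl
  intro j _
  by_cases h : γ j = 1 <;> simp [h]

lemma negF_flip_single_bad (j : Fin r) (w : WB r) (hbad : w.left j ≠ 1) :
    negF ((⟨eVec r j, 1⟩ : WB r) * w) + ((j : ℕ) + 1) = negF w := by
  unfold negF
  rw [flip_left]
  have hj : ∀ f : Fin r → ℕ, ∑ k : Fin r, f k = f j + ∑ k ∈ Finset.univ.erase j, f k :=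
    fun f => (Finset.add_sum_erase _ f (Finset.mem_univ j)).symm
  rw [hj, hj]
  have h1 : (if (eVec r j * w.left) j = 1 then 0 else (j : ℕ) + 1) = 0 := by
    rcases two_cases (w.left j) with h | h
    · exact absurd h hbad
    · simp [eVec, h, Pi.mul_apply, bad_mul_bad]
  have h2 : (if w.left j = 1 then 0 else (j : ℕ) + 1) = (j : ℕ) + 1 := by simp [hbad]
  have h3 : ∀ k ∈ Finset.univ.erase j,
      (if (eVec r j * w.left) k = 1 then 0 else (k : ℕ) + 1)
        = (if w.left k = 1 then 0 else (k : ℕ) + 1) := by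
    intro k hk
    have : k ≠ j := (Finset.mem_erase.mp hk).1
    simp [eVec, this, Pi.mul_apply]
  rw [h1, h2, Finset.sum_congr rfl h3]
  omega

/-- the set of pairs whose inversion status can change under a flip with support `supp γ` -/
def flipD (γ : NB r) (w : WB r) : Finset (Fin r × Fin r) :=
  Finset.univ.filter fun p : Fin r × Fin r => p.1 < p.2 ∧
    ((w.right p.2 < w.right p.1 ∧ γ (w.right p.1) ≠ 1) ∨
     (w.right p.1 < w.right p.2 ∧ γ (w.right p.2) ≠ 1))

lemma master_flip (x y x' y' : ℤ)
    (hx : x' = x ∨ (x' = -x ∧ x.natAbs < y.natAbs))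
    (hy : y' = y ∨ (y' = -y ∧ y.natAbs < x.natAbs)) :
    (y' < x' ↔ y < x) := by omega

lemma flip_pair_iff (γ : NB r) (w : WB r) (p : Fin r × Fin r) (hp : p.1 < p.2)
    (hD : p ∉ flipD γ w) :
    (win ((⟨γ, 1⟩ : WB r) * w) p.2 < win ((⟨γ, 1⟩ : WB r) * w) p.1 ↔ win w p.2 < win w p.1) := by
  simp only [flipD, Finset.mem_filter, Finset.mem_univ, true_and, not_and, not_or] at hD
  have hD' := hD hp
  have hne : w.right p.1 ≠ w.right p.2 := right_ne w (ne_of_lt hp)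
  have habs : (win w p.1).natAbs ≠ (win w p.2).natAbs := by
    rw [win_natAbs, win_natAbs]
    intro h
    exact hne (Fin.ext (by omega))
  apply master_flip
  · rw [win_flip]
    rcases two_cases (γ (w.right p.1)) with h | h
    · simp [h]
    · right
      have h1 : γ (w.right p.1) ≠ 1 := h ▸ bad_ne_one
      have : ¬ (w.right p.2 < w.right p.1) := fun hc => hD'.1 hc h1
      have hlt : w.right p.1 < w.right p.2 := lt_of_le_of_ne (not_lt.mp this) hne
      simp only [h, bad_ne_one, if_neg (h ▸ bad_ne_one)]
      refine ⟨rfl, ?_⟩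
      rw [win_natAbs, win_natAbs]
      exact Nat.add_lt_add_right hlt 1
  · rw [win_flip]
    rcases two_cases (γ (w.right p.2)) with h | h
    · simp [h]
    · right
      have h1 : γ (w.right p.2) ≠ 1 := h ▸ bad_ne_one
      have : ¬ (w.right p.1 < w.right p.2) := fun hc => hD'.2 hc h1
      have hlt : w.right p.2 < w.right p.1 := lt_of_le_of_ne (not_lt.mp this) hne.symm
      simp only [h, if_neg (h ▸ bad_ne_one)]
      refine ⟨rfl, ?_⟩
      rw [win_natAbs, win_natAbs]
      exact Nat.add_lt_add_right hlt 1

lemma flipD_card (γ : NB r) (w : WB r) :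
    (flipD γ w).card ≤ ∑ j ∈ supp γ, (j : ℕ) := by
  have : (flipD γ w).card ≤ ((supp γ).sigma fun j => Finset.range (j : ℕ)).card := by
    apply Finset.card_le_card_of_injOn
      (fun p => if w.right p.2 < w.right p.1
        then ⟨w.right p.1, (w.right p.2 : ℕ)⟩ else ⟨w.right p.2, (w.right p.1 : ℕ)⟩)
    · intro p hp
      simp only [Finset.mem_coe] at hp ⊢
      simp only [flipD, Finset.mem_filter, Finset.mem_univ, true_and] at hp
      obtain ⟨hlt, hcase⟩ := hp
      rcases hcase with ⟨h1, h2⟩ | ⟨h1, h2⟩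
      · rw [if_pos h1]
        simp only [Finset.mem_sigma, Finset.mem_range, supp, Finset.mem_filter, Finset.mem_univ,
          true_and]
        exact ⟨h2, h1⟩
      · rw [if_neg (by exact fun hc => absurd (lt_trans h1 hc) (lt_irrefl _))]
        simp only [Finset.mem_sigma, Finset.mem_range, supp, Finset.mem_filter, Finset.mem_univ,
          true_and]
        exact ⟨h2, h1⟩
    · intro p hp q hq hfq
      simp only [flipD, Finset.coe_filter, Set.mem_setOf_eq, Finset.mem_univ, true_and] at hp hq
      have key : ∀ u v : Fin r × Fin r, u.1 < u.2 → v.1 < v.2 →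
          w.right u.1 = w.right v.1 → (w.right u.2 : ℕ) = (w.right v.2 : ℕ) → u = v := by
        intro u v hu hv h1 h2
        have e1 : u.1 = v.1 := w.right.injective h1
        have e2 : u.2 = v.2 := w.right.injective (Fin.ext h2)
        exact Prod.ext e1 e2
      by_cases c1 : w.right p.2 < w.right p.1 <;> by_cases c2 : w.right q.2 < w.right q.1 <;>
        simp only [c1, c2, if_pos, if_neg, if_true, if_false, Sigma.mk.inj_iff, heq_eq_eq] at hfq
      · exact key p q hp.1 hq.1 hfq.1 hfq.2
      · -- p inverted, q not: cross case, contradiction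
        exfalso
        have e1 : p.1 = q.2 := w.right.injective hfq.1
        have e2 : p.2 = q.1 := w.right.injective (Fin.ext hfq.2)
        have := hp.1; have := hq.1; omega
      · exfalso
        have e1 : p.2 = q.1 := w.right.injective hfq.1
        have e2 : p.1 = q.2 := w.right.injective (Fin.ext hfq.2)
        have := hp.1; have := hq.1; omega
      · have e1 : p.2 = q.2 := w.right.injective hfq.1
        have e2 : p.1 = q.1 := w.right.injective (Fin.ext hfq.2)
        exact Prod.ext e2 e1
  calc (flipD γ w).card ≤ _ := this
    _ = ∑ j ∈ supp γ, (j : ℕ) := by rw [Finset.card_sigma]; simp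

/-- key increase lemma: if the support of the flip is "good" in `w`, length goes up -/
lemma LF_le_flip (γ : NB r) (w : WB r) (hs : ∀ j, γ j ≠ 1 → w.left j = 1) :
    LF w ≤ LF ((⟨γ, 1⟩ : WB r) * w) := by
  have hinv : invF (win w) ≤ invF (win ((⟨γ, 1⟩ : WB r) * w)) + (flipD γ w).card :=
    invF_le _ _ _ (fun p hp hD => (flip_pair_iff γ w p hp hD).symm)
  have hcard := flipD_card γ w
  have hneg := negF_flip_of_good γ w hs
  have hsum : ∑ j ∈ supp γ, (j : ℕ) ≤ ∑ j ∈ supp γ, ((j : ℕ) + 1) :=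
    Finset.sum_le_sum fun j _ => by omega
  unfold LF
  omega

/-- key decrease lemma: flipping a single bad coordinate decreases length -/
lemma LF_flip_lt (j : Fin r) (w : WB r) (hbad : w.left j ≠ 1) :
    LF ((⟨eVec r j, 1⟩ : WB r) * w) + 1 ≤ LF w := by
  have hinv : invF (win ((⟨eVec r j, 1⟩ : WB r) * w)) ≤ invF (win w) + (flipD (eVec r j) w).card :=
    invF_le _ _ _ (fun p hp hD => flip_pair_iff (eVec r j) w p hp hD)
  have hcard : (flipD (eVec r j) w).card ≤ (j : ℕ) := by
    have h1 := flipD_card (eVec r j) w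
    have h2 : supp (eVec r j) = {j} := by
      ext k
      simp only [supp, Finset.mem_filter, Finset.mem_univ, true_and, Finset.mem_singleton, eVec]
      by_cases h : k = j <;> simp [h, bad_ne_one]
    rw [h2, Finset.sum_singleton] at h1
    exact h1
  have hneg := negF_flip_single_bad j w hbad
  unfold LF
  omega

end Stmt7Aux
namespace Stmt7Aux
open Finset
variable {r : ℕ}

lemma sB_spec (k : ℕ) (hk1 : 1 ≤ k) (hk2 : k < r) :
    sB r k = ⟨1, Equiv.swap ⟨k-1, by omega⟩ ⟨k, hk2⟩⟩ := by
  rw [sB, dif_pos ⟨hk1, hk2⟩]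

lemma swap_right (k : ℕ) (hk1 : 1 ≤ k) (hk2 : k < r) (w : WB r) (i : Fin r) :
    (sB r k * w).right i = Equiv.swap ⟨k-1, by omega⟩ ⟨k, hk2⟩ (w.right i) := by
  rw [sB_spec k hk1 hk2]
  rfl

lemma swap_left (k : ℕ) (hk1 : 1 ≤ k) (hk2 : k < r) (w : WB r) (j : Fin r) :
    (sB r k * w).left j = w.left (Equiv.swap ⟨k-1, by omega⟩ ⟨k, hk2⟩ j) := by
  rw [sB_spec k hk1 hk2, SemidirectProduct.mul_left]
  show (1 : NB r) j * w.left ((Equiv.swap _ _).symm j) = _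
  rw [Pi.one_apply, one_mul, Equiv.symm_swap]

lemma win_swap (k : ℕ) (hk1 : 1 ≤ k) (hk2 : k < r) (w : WB r) (i : Fin r) :
    win (sB r k * w) i = if w.left (w.right i) = 1
      then ((Equiv.swap (⟨k-1, by omega⟩ : Fin r) ⟨k, hk2⟩ (w.right i) : ℕ) + 1 : ℤ)
      else -((Equiv.swap (⟨k-1, by omega⟩ : Fin r) ⟨k, hk2⟩ (w.right i) : ℕ) + 1 : ℤ) := by
  unfold win
  rw [swap_right k hk1 hk2, swap_left k hk1 hk2, Equiv.swap_apply_self]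

lemma zswap_key (k x y x' y' : ℤ) (hk : 1 ≤ k)
    (hx : (x = k ∧ x' = k+1) ∨ (x = -k ∧ x' = -(k+1)) ∨ (x = k+1 ∧ x' = k) ∨
      (x = -(k+1) ∧ x' = -k) ∨ (x' = x ∧ x ≠ k ∧ x ≠ -k ∧ x ≠ k+1 ∧ x ≠ -(k+1)))
    (hy : (y = k ∧ y' = k+1) ∨ (y = -k ∧ y' = -(k+1)) ∨ (y = k+1 ∧ y' = k) ∨
      (y = -(k+1) ∧ y' = -k) ∨ (y' = y ∧ y ≠ k ∧ y ≠ -k ∧ y ≠ k+1 ∧ y ≠ -(k+1)))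
    (hxy : x ≠ y)
    (hno : ¬((x = k ∧ y = k+1) ∨ (x = k+1 ∧ y = k) ∨ (x = -k ∧ y = -(k+1)) ∨
      (x = -(k+1) ∧ y = -k))) :
    (y' < x' ↔ y < x) := by omega

lemma swap_pair_iff (k : ℕ) (hk1 : 1 ≤ k) (hk2 : k < r) (w : WB r) (p : Fin r × Fin r)
    (hp : p.1 < p.2)
    (hno : ((w.right p.1 = ⟨k-1, by omega⟩ ∧ w.right p.2 = ⟨k, hk2⟩) ∨
        (w.right p.1 = ⟨k, hk2⟩ ∧ w.right p.2 = ⟨k-1, by omega⟩)) →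
      w.left ⟨k-1, by omega⟩ ≠ w.left ⟨k, hk2⟩) :
    (win (sB r k * w) p.2 < win (sB r k * w) p.1 ↔ win w p.2 < win w p.1) := by
  have ha1 : ((⟨k-1, by omega⟩ : Fin r) : ℕ) = k - 1 := rfl
  have ha2 : ((⟨k, hk2⟩ : Fin r) : ℕ) = k := rfl
  set a1 : Fin r := ⟨k-1, by omega⟩
  set a2 : Fin r := ⟨k, hk2⟩
  have hne : w.right p.1 ≠ w.right p.2 := right_ne w (ne_of_lt hp)
  -- per-position value description
  have key : ∀ i : Fin r,
      (win w i = (k:ℤ) ∧ win (sB r k * w) i = (k:ℤ)+1 ∧ w.right i = a1) ∨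
      (win w i = -(k:ℤ) ∧ win (sB r k * w) i = -((k:ℤ)+1) ∧ w.right i = a1) ∨
      (win w i = (k:ℤ)+1 ∧ win (sB r k * w) i = (k:ℤ) ∧ w.right i = a2) ∨
      (win w i = -((k:ℤ)+1) ∧ win (sB r k * w) i = -(k:ℤ) ∧ w.right i = a2) ∨
      (win (sB r k * w) i = win w i ∧ win w i ≠ (k:ℤ) ∧ win w i ≠ -(k:ℤ) ∧
        win w i ≠ (k:ℤ)+1 ∧ win w i ≠ -((k:ℤ)+1)) := by
    intro i
    rw [win_swap k hk1 hk2]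
    unfold win
    by_cases e1 : w.right i = a1
    · rw [e1, Equiv.swap_apply_left]
      rcases two_cases (w.left a1) with s | s
      · left
        rw [if_pos s, if_pos s, ha1, ha2]
        refine ⟨by omega, by omega, rfl⟩
      · right; left
        rw [if_neg (s ▸ bad_ne_one), if_neg (s ▸ bad_ne_one), ha1, ha2]
        refine ⟨by omega, by omega, rfl⟩
    · by_cases e2 : w.right i = a2
      · rw [e2, Equiv.swap_apply_right]
        rcases two_cases (w.left a2) with s | s
        · right; right; left
          rw [if_pos s, if_pos s, ha1, ha2]
          refine ⟨by omega, by omega, rfl⟩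
        · right; right; right; left
          rw [if_neg (s ▸ bad_ne_one), if_neg (s ▸ bad_ne_one), ha1, ha2]
          refine ⟨by omega, by omega, rfl⟩
      · rw [Equiv.swap_apply_of_ne_of_ne e1 e2]
        have hv1 : (w.right i : ℕ) ≠ k - 1 := fun h => e1 (Fin.ext (h.trans ha1.symm))
        have hv2 : (w.right i : ℕ) ≠ k := fun h => e2 (Fin.ext (h.trans ha2.symm))
        right; right; right; right
        split <;> refine ⟨rfl, ?_, ?_, ?_, ?_⟩ <;> omega
  by_cases hpair : (w.right p.1 = a1 ∧ w.right p.2 = a2) ∨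
      (w.right p.1 = a2 ∧ w.right p.2 = a1)
  · -- the exchanged pair: opposite signs by hno
    have hξ := hno hpair
    rw [win_swap k hk1 hk2, win_swap k hk1 hk2]
    unfold win
    rcases hpair with ⟨e1, e2⟩ | ⟨e1, e2⟩ <;>
      rw [e1, e2] <;>
      rcases two_cases (w.left a1) with s1 | s1 <;> rcases two_cases (w.left a2) with s2 | s2 <;>
      first
        | exact absurd (s1.trans s2.symm) hξ
        | · have n2 : ¬ (w.left a2 = 1) := by rw [s2]; exact bad_ne_one
            simp only [Equiv.swap_apply_left, Equiv.swap_apply_right, if_pos s1, if_neg n2,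
              Fin.val_mk]
            omega
        | · have n1 : ¬ (w.left a1 = 1) := by rw [s1]; exact bad_ne_one
            simp only [Equiv.swap_apply_left, Equiv.swap_apply_right, if_neg n1, if_pos s2,
              Fin.val_mk]
            omega
  · -- not the exchanged pair: use zswap_key
    have k1 := key p.1
    have k2 := key p.2
    -- selectors
    have sel : ∀ i : Fin r, (win w i = (k:ℤ) ∨ win w i = -(k:ℤ) → w.right i = a1) ∧
        (win w i = (k:ℤ)+1 ∨ win w i = -((k:ℤ)+1) → w.right i = a2) := by
      intro i
      rcases key i with ⟨h1, _, h3⟩ | ⟨h1, _, h3⟩ | ⟨h1, _, h3⟩ | ⟨h1, _, h3⟩ |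
          ⟨_, h2, h3, h4, h5⟩ <;>
        constructor <;> intro hv <;> first | exact h3 | omega
    apply zswap_key (k:ℤ) _ _ _ _ (by exact_mod_cast hk1)
    · rcases k1 with ⟨h1, h2, _⟩ | ⟨h1, h2, _⟩ | ⟨h1, h2, _⟩ | ⟨h1, h2, _⟩ | ⟨h1, h2, h3, h4, h5⟩ <;>
        omega
    · rcases k2 with ⟨h1, h2, _⟩ | ⟨h1, h2, _⟩ | ⟨h1, h2, _⟩ | ⟨h1, h2, _⟩ | ⟨h1, h2, h3, h4, h5⟩ <;>
        omega
    · have hab : (win w p.1).natAbs ≠ (win w p.2).natAbs := by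
        rw [win_natAbs, win_natAbs]
        intro h
        exact hne (Fin.ext (by omega))
      omega
    · intro hcon
      apply hpair
      rcases hcon with ⟨hx0, hy0⟩ | ⟨hx0, hy0⟩ | ⟨hx0, hy0⟩ | ⟨hx0, hy0⟩
      · exact Or.inl ⟨(sel p.1).1 (Or.inl hx0), (sel p.2).2 (Or.inl hy0)⟩
      · exact Or.inr ⟨(sel p.1).2 (Or.inl hx0), (sel p.2).1 (Or.inl hy0)⟩
      · exact Or.inl ⟨(sel p.1).1 (Or.inr hx0), (sel p.2).2 (Or.inr hy0)⟩
      · exact Or.inr ⟨(sel p.1).2 (Or.inr hx0), (sel p.2).1 (Or.inr hy0)⟩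

end Stmt7Aux
namespace Stmt7Aux
open Finset
variable {r : ℕ}

lemma sum_two (f g : Fin r → ℕ) (a b : Fin r) (hab : a ≠ b)
    (h : ∀ j, j ≠ a → j ≠ b → f j = g j) :
    (∑ j, f j) + (g a + g b) = (∑ j, g j) + (f a + f b) := by
  have hb : b ∈ Finset.univ.erase a := Finset.mem_erase.mpr ⟨hab.symm, Finset.mem_univ b⟩
  have Hf : ∑ j, f j = f a + (f b + ∑ j ∈ (Finset.univ.erase a).erase b, f j) := by
    rw [Finset.add_sum_erase _ f hb, Finset.add_sum_erase _ f (Finset.mem_univ a)]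
  have Hg : ∑ j, g j = g a + (g b + ∑ j ∈ (Finset.univ.erase a).erase b, g j) := by
    rw [Finset.add_sum_erase _ g hb, Finset.add_sum_erase _ g (Finset.mem_univ a)]
  have : ∑ j ∈ (Finset.univ.erase a).erase b, f j = ∑ j ∈ (Finset.univ.erase a).erase b, g j := by
    apply Finset.sum_congr rfl
    intro j hj
    simp only [Finset.mem_erase] at hj
    exact h j hj.2.1 hj.1
  omega

lemma negF_swap (k : ℕ) (hk1 : 1 ≤ k) (hk2 : k < r) (w : WB r) :
    negF (sB r k * w) +
      ((if w.left ⟨k-1, by omega⟩ = 1 then 0 else k) + (if w.left ⟨k, hk2⟩ = 1 then 0 else k+1))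
    = negF w +
      ((if w.left ⟨k-1, by omega⟩ = 1 then 0 else k+1) + (if w.left ⟨k, hk2⟩ = 1 then 0 else k)) := by
  have hab : ((⟨k-1, by omega⟩ : Fin r)) ≠ ⟨k, hk2⟩ := by
    simp only [ne_eq, Fin.mk.injEq]; omega
  set F := fun j : Fin r =>
    if w.left (Equiv.swap (⟨k-1, by omega⟩ : Fin r) ⟨k, hk2⟩ j) = 1 then 0 else (j:ℕ)+1 with hF
  set G := fun j : Fin r => if w.left j = 1 then 0 else (j:ℕ)+1 with hG
  have h0 : negF (sB r k * w) = ∑ j : Fin r, F j := by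
    unfold negF
    exact Finset.sum_congr rfl (fun j _ => by rw [swap_left k hk1 hk2, hF])
  have hnegw : negF w = ∑ j : Fin r, G j := rfl
  have h := sum_two F G ⟨k-1, by omega⟩ ⟨k, hk2⟩ hab
    (fun j hj1 hj2 => by simp only [hF, hG, Equiv.swap_apply_of_ne_of_ne hj1 hj2])
  have vF1 : F ⟨k-1, by omega⟩ = if w.left ⟨k, hk2⟩ = 1 then 0 else k := by
    simp only [hF, Equiv.swap_apply_left, Fin.val_mk]
    by_cases hc : w.left ⟨k, hk2⟩ = 1 <;> simp [hc] <;> omega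
  have vF2 : F ⟨k, hk2⟩ = if w.left ⟨k-1, by omega⟩ = 1 then 0 else k+1 := by
    simp only [hF, Equiv.swap_apply_right, Fin.val_mk]
  have vG1 : G ⟨k-1, by omega⟩ = if w.left ⟨k-1, by omega⟩ = 1 then 0 else k := by
    simp only [hG, Fin.val_mk]
    by_cases hc : w.left ⟨k-1, by omega⟩ = 1 <;> simp [hc] <;> omega
  have vG2 : G ⟨k, hk2⟩ = if w.left ⟨k, hk2⟩ = 1 then 0 else k+1 := by
    simp only [hG, Fin.val_mk]
  simp only [vF1, vF2, vG1, vG2] at h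
  rw [h0, hnegw]
  rcases two_cases (w.left ⟨k-1, by omega⟩) with s1 | s1 <;>
    rcases two_cases (w.left ⟨k, hk2⟩) with s2 | s2 <;>
    simp [s1, s2, bad_ne_one] at h ⊢ <;>
    omega

/-- the unique possibly-changed pair for a swap -/
lemma invF_swap_le (k : ℕ) (hk1 : 1 ≤ k) (hk2 : k < r) (w : WB r) :
    invF (win (sB r k * w)) ≤ invF (win w) + 1 ∧
      invF (win w) ≤ invF (win (sB r k * w)) + 1 := by
  set q0 : Fin r × Fin r :=
    if (w.right⁻¹ (⟨k-1, by omega⟩ : Fin r)) < w.right⁻¹ (⟨k, hk2⟩ : Fin r)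
      then (w.right⁻¹ (⟨k-1, by omega⟩ : Fin r), w.right⁻¹ (⟨k, hk2⟩ : Fin r))
      else (w.right⁻¹ (⟨k, hk2⟩ : Fin r), w.right⁻¹ (⟨k-1, by omega⟩ : Fin r)) with hq0
  have hiff : ∀ p : Fin r × Fin r, p.1 < p.2 → p ∉ ({q0} : Finset (Fin r × Fin r)) →
      (win (sB r k * w) p.2 < win (sB r k * w) p.1 ↔ win w p.2 < win w p.1) := by
    intro p hp hD
    apply swap_pair_iff k hk1 hk2 w p hp
    intro hpair
    exfalso
    apply hD
    simp only [Finset.mem_singleton, hq0]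
    rcases hpair with ⟨e1, e2⟩ | ⟨e1, e2⟩
    · have f1 : p.1 = w.right⁻¹ ⟨k-1, by omega⟩ := by
        rw [← e1]; exact (Equiv.Perm.inv_apply_self _ _).symm
      have f2 : p.2 = w.right⁻¹ ⟨k, hk2⟩ := by
        rw [← e2]; exact (Equiv.Perm.inv_apply_self _ _).symm
      rw [if_pos (by rw [← f1, ← f2]; exact hp)]
      exact Prod.ext f1 f2
    · have f1 : p.1 = w.right⁻¹ ⟨k, hk2⟩ := by
        rw [← e1]; exact (Equiv.Perm.inv_apply_self _ _).symm
      have f2 : p.2 = w.right⁻¹ ⟨k-1, by omega⟩ := by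
        rw [← e2]; exact (Equiv.Perm.inv_apply_self _ _).symm
      rw [if_neg (by rw [← f1, ← f2]; exact fun hc => absurd (lt_trans hc hp) (lt_irrefl _))]
      exact Prod.ext f1 f2
  constructor
  · have := invF_le (win w) (win (sB r k * w)) {q0} hiff
    simpa using this
  · have := invF_le (win (sB r k * w)) (win w) {q0} (fun p hp hD => (hiff p hp hD).symm)
    simpa using this

lemma invF_swap_eq_of_ne (k : ℕ) (hk1 : 1 ≤ k) (hk2 : k < r) (w : WB r)
    (hne : w.left ⟨k-1, by omega⟩ ≠ w.left ⟨k, hk2⟩) :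
    invF (win (sB r k * w)) = invF (win w) :=
  invF_eq _ _ (fun p hp => swap_pair_iff k hk1 hk2 w p hp (fun _ => hne))

/-- step bound for the swap generators -/
lemma LF_swap_step (k : ℕ) (hk1 : 1 ≤ k) (hk2 : k < r) (w : WB r) :
    LF w ≤ LF (sB r k * w) + 1 ∧ LF (sB r k * w) ≤ LF w + 1 := by
  have hneg := negF_swap k hk1 hk2 w
  by_cases hs : w.left ⟨k-1, by omega⟩ = w.left ⟨k, hk2⟩
  · -- signs equal: negF equal, inv changes by at most 1
    have hinv := invF_swap_le k hk1 hk2 w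
    rw [hs] at hneg
    unfold LF
    constructor <;> omega
  · have hinv := invF_swap_eq_of_ne k hk1 hk2 w hs
    rcases two_cases (w.left ⟨k-1, by omega⟩) with s1 | s1 <;>
      rcases two_cases (w.left ⟨k, hk2⟩) with s2 | s2 <;>
      first
        | exact absurd (s1.trans s2.symm) hs
        | (simp only [s1, s2, if_pos, if_true,
            if_neg (show ¬ (Multiplicative.ofAdd (1:ZMod 2)) = 1 from bad_ne_one)] at hneg
           unfold LF
           constructor <;> omega)

/-- descent when coordinate k is bad but k-1 is good -/
lemma LF_swap_descent_sign (k : ℕ) (hk1 : 1 ≤ k) (hk2 : k < r) (w : WB r)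
    (h1 : w.left ⟨k-1, by omega⟩ = 1) (h2 : w.left ⟨k, hk2⟩ ≠ 1) :
    LF (sB r k * w) + 1 ≤ LF w := by
  have hneg := negF_swap k hk1 hk2 w
  have hinv := invF_swap_eq_of_ne k hk1 hk2 w (h1 ▸ fun hc => h2 hc.symm)
  rw [if_pos h1, if_pos h1, if_neg h2, if_neg h2] at hneg
  unfold LF
  omega

/-- descent when the window has an adjacent inversion with both signs positive -/
lemma LF_swap_descent_inv (k : ℕ) (hk1 : 1 ≤ k) (hk2 : k < r) (w : WB r)
    (h1 : w.left ⟨k-1, by omega⟩ = 1) (h2 : w.left ⟨k, hk2⟩ = 1)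
    (hpos : w.right⁻¹ (⟨k, hk2⟩ : Fin r) < w.right⁻¹ (⟨k-1, by omega⟩ : Fin r)) :
    LF (sB r k * w) + 1 ≤ LF w := by
  have hneg := negF_swap k hk1 hk2 w
  rw [if_pos h1, if_pos h1, if_pos h2, if_pos h2] at hneg
  set p1 : Fin r := w.right⁻¹ (⟨k, hk2⟩ : Fin r) with hp1
  set p2 : Fin r := w.right⁻¹ (⟨k-1, by omega⟩ : Fin r) with hp2
  have e1 : w.right p1 = ⟨k, hk2⟩ := Equiv.Perm.apply_inv_self _ _
  have e2 : w.right p2 = ⟨k-1, by omega⟩ := Equiv.Perm.apply_inv_self _ _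
  have hv1 : win w p1 = ((k : ℤ) + 1) := by
    unfold win
    rw [e1, if_pos h2, Fin.val_mk]
  have hv2 : win w p2 = (k : ℤ) := by
    unfold win
    rw [e2, if_pos h1, Fin.val_mk]
    omega
  have hv1' : win (sB r k * w) p1 = (k : ℤ) := by
    rw [win_swap k hk1 hk2, e1, if_pos h2, Equiv.swap_apply_right, Fin.val_mk]
    omega
  have hv2' : win (sB r k * w) p2 = ((k : ℤ) + 1) := by
    rw [win_swap k hk1 hk2, e2, if_pos h1, Equiv.swap_apply_left, Fin.val_mk]
  have hinv : invF (win (sB r k * w)) + 1 = invF (win w) := by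
    apply invF_succ_eq _ _ (p1, p2) hpos
    · simp only
      omega
    · simp only
      omega
    · intro p hp hne
      apply swap_pair_iff k hk1 hk2 w p hp
      intro hpair
      exfalso
      rcases hpair with ⟨f1, f2⟩ | ⟨f1, f2⟩
      · -- p.1 = p2-position, p.2 = p1-position: contradicts order
        have : p.1 = p2 := by rw [hp2, ← f1, Equiv.Perm.inv_apply_self]
        have : p.2 = p1 := by rw [hp1, ← f2, Equiv.Perm.inv_apply_self]
        omega
      · have g1 : p.1 = p1 := by rw [hp1, ← f1, Equiv.Perm.inv_apply_self]
        have g2 : p.2 = p2 := by rw [hp2, ← f2, Equiv.Perm.inv_apply_self]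
        exact hne (Prod.ext g1 g2)
  unfold LF
  omega

end Stmt7Aux
namespace Stmt7Aux
open Finset
variable {r : ℕ}

lemma supp_eVec (j : Fin r) : supp (eVec r j) = {j} := by
  ext k
  simp only [supp, Finset.mem_filter, Finset.mem_univ, true_and, Finset.mem_singleton, eVec]
  by_cases h : k = j <;> simp [h, bad_ne_one]

lemma flip_mul (γ δ : NB r) : (⟨γ, 1⟩ : WB r) * ⟨δ, 1⟩ = ⟨γ * δ, 1⟩ := by
  apply SemidirectProduct.ext
  · simp [SemidirectProduct.mul_left]
  · simp [SemidirectProduct.mul_right]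

lemma eVec_sq (j : Fin r) : eVec r j * eVec r j = 1 := by
  funext k
  simp only [Pi.mul_apply, eVec, Pi.one_apply]
  by_cases h : k = j <;> simp [h] <;> decide

lemma flip_invol (j : Fin r) : (⟨eVec r j, 1⟩ : WB r) * ⟨eVec r j, 1⟩ = 1 := by
  rw [flip_mul, eVec_sq]
  rfl

lemma sB_invol (k : ℕ) : sB r k * sB r k = 1 := by
  unfold sB
  split
  · apply SemidirectProduct.ext
    · simp [SemidirectProduct.mul_left]
    · simp [SemidirectProduct.mul_right]
  · simp

lemma LF_one : LF (1 : WB r) = 0 := by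
  have hw : ∀ i : Fin r, win (1 : WB r) i = ((i : ℕ) : ℤ) + 1 := by
    intro i
    unfold win
    simp
  unfold LF invF negF
  have h1 : (Finset.univ.filter fun p : Fin r × Fin r =>
      p.1 < p.2 ∧ win (1 : WB r) p.2 < win (1 : WB r) p.1) = ∅ := by
    apply Finset.filter_eq_empty_iff.mpr
    intro p _
    rw [hw, hw]
    intro ⟨h1, h2⟩
    have : (p.1 : ℕ) < (p.2 : ℕ) := h1
    omega
  rw [h1]
  simp

lemma LF_t0_step (w : WB r) : LF w ≤ LF (tB r 0 * w) + 1 ∧ LF (tB r 0 * w) ≤ LF w + 1 := by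
  by_cases hr : 0 < r
  · rw [tB, dif_pos hr]
    set j : Fin r := ⟨0, hr⟩ with hj
    have hv : (j : ℕ) = 0 := rfl
    have hcard : (flipD (eVec r j) w).card = 0 := by
      have h := flipD_card (eVec r j) w
      rw [supp_eVec, Finset.sum_singleton] at h
      omega
    have hinv1 : invF (win ((⟨eVec r j, 1⟩ : WB r) * w)) ≤ invF (win w) :=
      le_trans (invF_le _ _ _ (fun p hp hD => flip_pair_iff (eVec r j) w p hp hD)) (by omega)
    have hinv2 : invF (win w) ≤ invF (win ((⟨eVec r j, 1⟩ : WB r) * w)) :=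
      le_trans (invF_le _ _ _ (fun p hp hD => (flip_pair_iff (eVec r j) w p hp hD).symm))
        (by omega)
    rcases two_cases (w.left j) with s | s
    · have hneg := negF_flip_of_good (eVec r j) w (by
        intro i hi
        have : i = j := by
          by_contra hne
          exact hi (by simp [eVec, hne])
        rw [this, s])
      rw [supp_eVec, Finset.sum_singleton] at hneg
      unfold LF
      constructor <;> omega
    · have hneg := negF_flip_single_bad j w (s ▸ bad_ne_one)
      unfold LF
      constructor <;> omega
  · have : r = 0 := by omega
    subst this
    rw [tB]
    simp

lemma LF_step (g : WB r) (hg : g ∈ genS r) (w : WB r) :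
    LF w ≤ LF (g * w) + 1 ∧ LF (g * w) ≤ LF w + 1 := by
  rcases hg with hg | ⟨i, hi1, hi2, rfl⟩
  · rw [Set.mem_singleton_iff.mp hg]
    exact LF_t0_step w
  · exact ⟨(LF_swap_step i hi1 hi2 w).1, (LF_swap_step i hi1 hi2 w).2⟩

lemma genS_invol (g : WB r) (hg : g ∈ genS r) : g * g = 1 := by
  rcases hg with hg | ⟨i, hi1, hi2, rfl⟩
  · rw [Set.mem_singleton_iff.mp hg]
    by_cases hr : 0 < r
    · rw [tB, dif_pos hr]
      exact flip_invol _
    · rw [tB, dif_neg (by omega)]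
      simp
  · exact sB_invol i

lemma LF_prod_le (l : List (WB r)) (hl : ∀ x ∈ l, x ∈ genS r) : LF l.prod ≤ l.length := by
  induction l with
  | nil => simp [LF_one]
  | cons g t ih =>
    rw [List.prod_cons]
    have h1 := (LF_step g (hl g (List.mem_cons_self)) t.prod).2
    have h2 := ih (fun x hx => hl x (List.mem_cons_of_mem g hx))
    simp only [List.length_cons]
    omega

lemma descent (w : WB r) (hw : w ≠ 1) :
    ∃ g ∈ genS r, g * (g * w) = w ∧ LF (g * w) + 1 ≤ LF w := by
  by_cases hbad : ∃ j : Fin r, w.left j ≠ 1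
  · -- some bad coordinate; take the least one
    have hT : (Finset.univ.filter fun j : Fin r => w.left j ≠ 1).Nonempty := by
      obtain ⟨j, hj⟩ := hbad
      exact ⟨j, by simp [hj]⟩
    set j := (Finset.univ.filter fun j : Fin r => w.left j ≠ 1).min' hT with hjdef
    have hjbad : w.left j ≠ 1 := by
      have := Finset.min'_mem _ hT
      simp only [Finset.mem_filter] at this
      exact this.2
    match hj0 : (j : ℕ), j.isLt with
    | 0, _ =>
      refine ⟨tB r 0, Or.inl rfl, ?_, ?_⟩
      · rw [← mul_assoc, genS_invol _ (Or.inl rfl), one_mul]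
      · have hr : 0 < r := lt_of_le_of_lt (Nat.zero_le _) j.isLt
        rw [tB, dif_pos hr]
        have : (⟨0, hr⟩ : Fin r) = j := Fin.ext (by simp only [Fin.val_mk]; omega)
        rw [this]
        exact LF_flip_lt j w hjbad
    | (k+1), hlt =>
      have hgood : w.left ⟨k, by omega⟩ = 1 := by
        by_contra hc
        have hmem : (⟨k, by omega⟩ : Fin r) ∈
            Finset.univ.filter fun j : Fin r => w.left j ≠ 1 := by simp [hc]
        have h5 : j ≤ (⟨k, by omega⟩ : Fin r) := Finset.min'_le _ _ hmem
        have h6 : (j : ℕ) ≤ k := h5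
        omega
      have hbadk : w.left ⟨k+1, hlt⟩ ≠ 1 := by
        have : (⟨k+1, hlt⟩ : Fin r) = j := Fin.ext (by simp only [Fin.val_mk]; omega)
        rw [this]
        exact hjbad
      refine ⟨sB r (k+1), Or.inr ⟨k+1, by omega, hlt, rfl⟩, ?_, ?_⟩
      · rw [← mul_assoc, sB_invol, one_mul]
      · exact LF_swap_descent_sign (k+1) (by omega) hlt w hgood hbadk
  · -- all coordinates good
    push_neg at hbad
    have hleft : w.left = 1 := funext fun j => hbad j
    have hright : w.right ≠ 1 := by
      intro hc
      exact hw (SemidirectProduct.ext hleft hc)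
    by_cases hmono : ∀ k : ℕ, ∀ h1 : 1 ≤ k, ∀ h2 : k < r,
        w.right⁻¹ (⟨k-1, by omega⟩ : Fin r) < w.right⁻¹ (⟨k, h2⟩ : Fin r)
    · exfalso
      -- then w.right⁻¹ is strictly monotone, hence the identity
      have key : ∀ d : ℕ, ∀ a b : Fin r, (b:ℕ) = (a:ℕ) + d + 1 → w.right⁻¹ a < w.right⁻¹ b := by
        intro d
        induction d with
        | zero =>
          intro a b hab
          have h2 : (b:ℕ) < r := b.isLt
          have e1 : a = (⟨(b:ℕ)-1, by omega⟩ : Fin r) := Fin.ext (by simp only [Fin.val_mk]; omega)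
          have e2 : b = (⟨(b:ℕ), h2⟩ : Fin r) := Fin.ext rfl
          have h3 := hmono (b:ℕ) (by omega) h2
          rw [← e1] at h3
          rwa [← e2] at h3
        | succ d ih =>
          intro a b hab
          have hmid : (a:ℕ) + d + 1 < r := by have := b.isLt; omega
          have h1 := ih a ⟨(a:ℕ)+d+1, hmid⟩ (by simp)
          have h2 : w.right⁻¹ (⟨(a:ℕ)+d+1, hmid⟩ : Fin r) < w.right⁻¹ b := by
            have e1 : (⟨(a:ℕ)+d+1, hmid⟩ : Fin r) = (⟨(b:ℕ)-1, by omega⟩ : Fin r) :=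
              Fin.ext (by simp only [Fin.val_mk]; omega)
            have e2 : b = (⟨(b:ℕ), b.isLt⟩ : Fin r) := Fin.ext rfl
            have h3 := hmono (b:ℕ) (by omega) b.isLt
            rw [← e1] at h3
            rwa [← e2] at h3
          exact lt_trans h1 h2
      have hsm : StrictMono (fun i => w.right⁻¹ i) := by
        intro a b hab
        exact key ((b:ℕ) - (a:ℕ) - 1) a b (by
          have : (a:ℕ) < (b:ℕ) := hab
          omega)
      have hsm2 : StrictMono (fun i => w.right i) := by
        intro a b hab
        rcases lt_trichotomy (w.right a) (w.right b) with h | h | h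
        · exact h
        · exact absurd (w.right.injective h) (ne_of_lt hab)
        · have := hsm h
          simp only [Equiv.Perm.inv_apply_self] at this
          exact absurd (lt_trans hab this) (lt_irrefl _)
      have : ∀ i, w.right i = i := by
        intro i
        have h1 : i ≤ w.right i :=
          @StrictMono.le_apply (Fin r) (inferInstanceAs (LinearOrder (Fin r)))
            (inferInstanceAs (WellFoundedLT (Fin r))) _ hsm2 i
        have h2 : i ≤ w.right⁻¹ i :=
          @StrictMono.le_apply (Fin r) (inferInstanceAs (LinearOrder (Fin r)))
            (inferInstanceAs (WellFoundedLT (Fin r))) _ hsm i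
        have h3 : w.right (w.right⁻¹ i) = i := Equiv.Perm.apply_inv_self _ _
        have h4 := hsm2.monotone h2
        rw [h3] at h4
        exact le_antisymm h4 h1
      exact hright (Equiv.ext this)
    · push_neg at hmono
      obtain ⟨k, hk1, hk2, hk3⟩ := hmono
      have hne : w.right⁻¹ (⟨k, hk2⟩ : Fin r) ≠ w.right⁻¹ (⟨k-1, by omega⟩ : Fin r) := by
        intro hc
        have := w.right⁻¹.injective hc
        simp only [Fin.mk.injEq] at this
        omega
      have hpos : w.right⁻¹ (⟨k, hk2⟩ : Fin r) < w.right⁻¹ (⟨k-1, by omega⟩ : Fin r) :=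
        lt_of_le_of_ne hk3 hne
      refine ⟨sB r k, Or.inr ⟨k, hk1, hk2, rfl⟩, ?_, ?_⟩
      · rw [← mul_assoc, sB_invol, one_mul]
      · exact LF_swap_descent_inv k hk1 hk2 w (hbad _) (hbad _) hpos

lemma exists_word : ∀ (n : ℕ) (w : WB r), LF w ≤ n →
    ∃ l : List (WB r), (∀ x ∈ l, x ∈ genS r) ∧ l.length ≤ LF w ∧ l.prod = w := by
  intro n
  induction n with
  | zero =>
    intro w hn
    by_cases hw : w = 1
    · exact ⟨[], by simp, by simp, by simp [hw]⟩
    · obtain ⟨g, _, _, hdec⟩ := descent w hw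
      omega
  | succ n ih =>
    intro w hn
    by_cases hw : w = 1
    · exact ⟨[], by simp, by simp, by simp [hw]⟩
    · obtain ⟨g, hg, hinv, hdec⟩ := descent w hw
      obtain ⟨l, hl, hlen, hprod⟩ := ih (g * w) (by omega)
      exact ⟨g :: l, by
        intro x hx
        rcases List.mem_cons.mp hx with rfl | hx
        · exact hg
        · exact hl x hx,
        by simp only [List.length_cons]; omega,
        by rw [List.prod_cons, hprod, hinv]⟩

theorem len_eq_LF (w : WB r) : len r w = LF w := by
  obtain ⟨l, hl, hlen, hprod⟩ := exists_word (LF w) w le_rfl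
  apply le_antisymm
  · exact le_trans (Nat.sInf_le ⟨l, hl, rfl, hprod⟩) hlen
  · refine le_csInf ⟨l.length, ⟨l, hl, rfl, hprod⟩⟩ ?_
    rintro n ⟨l', hl', rfl, rfl⟩
    exact LF_prod_le l' hl'

end Stmt7Aux
namespace Stmt7Aux
open Finset
variable {r : ℕ}

lemma tB_at (j : Fin r) : tB r (j : ℕ) = ⟨eVec r j, 1⟩ := dif_pos j.isLt

lemma tB_mem (m : ℕ) (j : Fin r) (hj : (j : ℕ) < m) : tB r (j : ℕ) ∈ Comega r m :=
  Subgroup.subset_closure ⟨(j : ℕ), hj, rfl⟩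

/-- characterization of the subgroup `Comega` -/
lemma Comega_char (m : ℕ) (c : WB r) :
    c ∈ Comega r m ↔ c.right = 1 ∧ ∀ j : Fin r, c.left j ≠ 1 → (j : ℕ) < m := by
  constructor
  · intro hc
    let K : Subgroup (WB r) :=
      { carrier := {c | c.right = 1 ∧ ∀ j : Fin r, c.left j ≠ 1 → (j : ℕ) < m}
        one_mem' := by
          refine ⟨rfl, fun j hj => absurd rfl hj⟩
        mul_mem' := by
          rintro x y ⟨hx1, hx2⟩ ⟨hy1, hy2⟩
          refine ⟨by rw [SemidirectProduct.mul_right, hx1, hy1, one_mul], ?_⟩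
          intro j hj
          rw [SemidirectProduct.mul_left, hx1] at hj
          simp only [map_one, MulAut.one_apply, Pi.mul_apply] at hj
          by_cases h1 : x.left j = 1
          · exact hy2 j (by
              intro h2
              rw [h1, h2, one_mul] at hj
              exact hj rfl)
          · exact hx2 j h1
        inv_mem' := by
          rintro x ⟨hx1, hx2⟩
          refine ⟨by rw [SemidirectProduct.inv_right, hx1, inv_one], ?_⟩
          intro j hj
          rw [SemidirectProduct.inv_left, hx1] at hj
          simp only [inv_one, map_one, MulAut.one_apply, Pi.inv_apply, ne_eq,
            inv_eq_one] at hj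
          exact hx2 j hj }
    have hle : Comega r m ≤ K := by
      apply (Subgroup.closure_le K).mpr
      rintro x ⟨i, hi, rfl⟩
      by_cases hir : i < r
      · rw [tB, dif_pos hir]
        refine ⟨rfl, fun j hj => ?_⟩
        have : j = ⟨i, hir⟩ := by
          by_contra hne
          exact hj (by simp [eVec, hne])
        rw [this]
        exact hi
      · rw [tB, dif_neg hir]
        exact ⟨rfl, fun j hj => absurd rfl hj⟩
    exact hle hc
  · rintro ⟨h1, h2⟩
    -- induction on the support
    suffices H : ∀ (n : ℕ) (γ : NB r), (∀ j : Fin r, γ j ≠ 1 → (j : ℕ) < m) →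
        (supp γ).card = n → (⟨γ, 1⟩ : WB r) ∈ Comega r m by
      have : c = ⟨c.left, 1⟩ := SemidirectProduct.ext rfl h1
      rw [this]
      exact H (supp c.left).card c.left h2 rfl
    intro n
    induction n with
    | zero =>
      intro γ hγ hcard
      have : ∀ j, γ j = 1 := by
        intro j
        by_contra hj
        have : j ∈ supp γ := by simp [supp, hj]
        rw [Finset.card_eq_zero] at hcard
        rw [hcard] at this
        exact absurd this (Finset.notMem_empty j)
      have : (⟨γ, 1⟩ : WB r) = 1 := by
        apply SemidirectProduct.ext
        · exact funext this
        · rfl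
      rw [this]
      exact one_mem _
    | succ n ih =>
      intro γ hγ hcard
      have hne : (supp γ).Nonempty := by
        rw [← Finset.card_pos, hcard]
        omega
      obtain ⟨j, hj⟩ := hne
      have hjbad : γ j ≠ 1 := by
        simp only [supp, Finset.mem_filter] at hj
        exact hj.2
      have hsplit : (⟨γ, 1⟩ : WB r) = tB r (j : ℕ) * ⟨eVec r j * γ, 1⟩ := by
        rw [tB_at, flip_mul, ← mul_assoc, eVec_sq, one_mul]
      rw [hsplit]
      apply mul_mem (tB_mem m j (hγ j hjbad))
      apply ih
      · intro i hi
        apply hγ i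
        intro hc
        apply hi
        simp only [Pi.mul_apply, hc, mul_one, eVec]
        by_cases hij : i = j
        · subst hij
          exact absurd hc hjbad
        · simp [hij]
      · have hsupp : supp (eVec r j * γ) = (supp γ).erase j := by
          ext i
          simp only [supp, Finset.mem_filter, Finset.mem_univ, true_and, Finset.mem_erase,
            Pi.mul_apply, eVec]
          by_cases hij : i = j
          · subst hij
            rcases two_cases (γ i) with h | h
            · exact absurd h hjbad
            · simp [h, bad_mul_bad, bad_ne_one]
          · simp [hij, and_comm]
        rw [hsupp, Finset.card_erase_of_mem hj, hcard]
        rfl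

lemma Dright_char (m : ℕ) (w : WB r) :
    w ∈ Dright r m ↔ ∀ j : Fin r, (j : ℕ) < m → w.left j = 1 := by
  constructor
  · intro h
    by_contra hc
    push_neg at hc
    obtain ⟨j, hj, hbad⟩ := hc
    have hmem := h (tB r (j : ℕ)) (tB_mem m j hj)
    rw [len_eq_LF, len_eq_LF, tB_at] at hmem
    have := LF_flip_lt j w hbad
    omega
  · intro hgood c hc
    rw [Comega_char] at hc
    obtain ⟨hcr, hcs⟩ := hc
    have hc2 : c = ⟨c.left, 1⟩ := SemidirectProduct.ext rfl hcr
    rw [len_eq_LF, len_eq_LF, hc2]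
    exact LF_le_flip c.left w (fun j hj => hgood j (hcs j hj))

lemma inv_left_apply (w : WB r) (j : Fin r) :
    (w⁻¹).left j = (w.left (w.right j))⁻¹ := by
  rw [SemidirectProduct.inv_left]
  simp only [permAct, MonoidHom.coe_mk, OneHom.coe_mk, MulEquiv.coe_mk, Equiv.coe_fn_mk,
    Function.comp_apply, Pi.inv_apply]
  rfl

lemma conj_right (γ : NB r) (w : WB r) : (w⁻¹ * (⟨γ, 1⟩ : WB r) * w).right = 1 := by
  simp [SemidirectProduct.mul_right, SemidirectProduct.inv_right]

lemma conj_left (γ : NB r) (w : WB r) (j : Fin r) :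
    (w⁻¹ * (⟨γ, 1⟩ : WB r) * w).left j = γ (w.right j) := by
  rw [mul_assoc]
  rw [show ((⟨γ, 1⟩ : WB r) * w) = ⟨γ * w.left, w.right⟩ from
    SemidirectProduct.ext (flip_left γ w) (flip_right γ w)]
  rw [SemidirectProduct.mul_left]
  simp only [Pi.mul_apply, inv_left_apply, SemidirectProduct.inv_right]
  simp only [permAct, MonoidHom.coe_mk, OneHom.coe_mk, MulEquiv.coe_mk, Equiv.coe_fn_mk,
    Function.comp_apply, Pi.mul_apply]
  have hsymm : (Equiv.symm (w.right⁻¹)) j = w.right j := rfl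
  show (w.left (w.right j))⁻¹ * (γ (w.right j) * w.left (w.right j)) = γ (w.right j)
  rcases two_cases (w.left (w.right j)) with h | h <;>
    rcases two_cases (γ (w.right j)) with h2 | h2 <;>
    rw [h, h2] <;> decide

lemma triv_char (m b' : ℕ) (w : WB r) :
    (∀ c ∈ Comega r m, w⁻¹ * c * w ∈ Comega r b' → c = 1) ↔
      (∀ j : Fin r, (j : ℕ) < m → b' ≤ ((w.right⁻¹ j : Fin r) : ℕ)) := by
  constructor
  · intro h j hj
    by_contra hc
    push_neg at hc
    have hmem : tB r (j : ℕ) ∈ Comega r m := tB_mem m j hj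
    have hconj : w⁻¹ * tB r (j : ℕ) * w ∈ Comega r b' := by
      rw [tB_at, Comega_char]
      refine ⟨conj_right _ _, ?_⟩
      intro u hu
      rw [conj_left] at hu
      have : w.right u = j := by
        by_contra hne
        exact hu (by simp [eVec, hne])
      have : u = w.right⁻¹ j := by rw [← this, Equiv.Perm.inv_apply_self]
      rw [this]
      exact hc
    have := h _ hmem hconj
    rw [tB_at] at this
    have hone : (⟨eVec r j, 1⟩ : WB r).left j = (1 : WB r).left j := by rw [this]
    simp only [SemidirectProduct.one_left, Pi.one_apply, eVec, if_pos rfl] at hone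
    exact bad_ne_one hone
  · intro h c hc hconj
    rw [Comega_char] at hc
    obtain ⟨hcr, hcs⟩ := hc
    have hc2 : c = ⟨c.left, 1⟩ := SemidirectProduct.ext rfl hcr
    rw [hc2] at hconj ⊢
    rw [Comega_char] at hconj
    obtain ⟨_, hconj2⟩ := hconj
    have : c.left = 1 := by
      funext j
      by_contra hj
      have hjm : (j : ℕ) < m := hcs j hj
      have hb := h j hjm
      have : c.left (w.right (w.right⁻¹ j)) ≠ 1 := by
        rw [Equiv.Perm.apply_inv_self]
        exact hj
      have := hconj2 (w.right⁻¹ j) (by rw [conj_left]; exact this)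
      omega
    rw [this]
    rfl

lemma D0_char (m b' : ℕ) (w : WB r) :
    w ∈ D0 r m b' ↔ (∀ j : Fin r, (j : ℕ) < m → w.left j = 1) ∧
      (∀ j : Fin r, (j : ℕ) < b' → w.left (w.right j) = 1) ∧
      (∀ j : Fin r, (j : ℕ) < m → b' ≤ ((w.right⁻¹ j : Fin r) : ℕ)) := by
  unfold D0 Dab
  simp only [Set.mem_setOf_eq]
  rw [Dright_char, Dright_char, triv_char]
  constructor
  · rintro ⟨⟨h1, h2⟩, h3⟩
    refine ⟨h1, ?_, h3⟩
    intro j hj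
    have := h2 j hj
    rw [inv_left_apply, inv_eq_one] at this
    exact this
  · rintro ⟨h1, h2, h3⟩
    refine ⟨⟨h1, ?_⟩, h3⟩
    intro j hj
    rw [inv_left_apply, inv_eq_one]
    exact h2 j hj

end Stmt7Aux

/-- For `1 ≤ a ≤ r−1` and `0 ≤ b ≤ r`:
`D⁰_{ω_{a+1},ω_b} ∪ t_{a+1}·D⁰_{ω_{a+1},ω_b}
  = {x ∈ D⁰_{ω_a,ω_b} : x⁻¹ C_{ω_{a+1}} x ∩ C_{ω_b} = {1}}`.
(In 0-indexed notation `t_{a+1} = tB r a`.) -/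
theorem stmt7 (r a b : ℕ) (hr : 2 ≤ r) (ha1 : 1 ≤ a) (ha : a ≤ r - 1) (hb : b ≤ r) :
    D0 r (a + 1) b ∪ tB r a • D0 r (a + 1) b =
      {x ∈ D0 r a b | ∀ c ∈ Comega r (a + 1), x⁻¹ * c * x ∈ Comega r b → c = 1} := by
  have har : a < r := by omega
  have htB : tB r a = ⟨eVec r ⟨a, har⟩, 1⟩ := dif_pos har
  have hsq : tB r a * tB r a = 1 := by rw [htB]; exact Stmt7Aux.flip_invol _
  have hinv : (tB r a)⁻¹ = tB r a := inv_eq_of_mul_eq_one_right hsq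
  ext x
  simp only [Set.mem_union, Set.mem_sep_iff]
  rw [Set.mem_smul_set_iff_inv_smul_mem, hinv, smul_eq_mul]
  rw [Stmt7Aux.D0_char (a+1) b x, Stmt7Aux.D0_char (a+1) b (tB r a * x),
    Stmt7Aux.D0_char a b x, Stmt7Aux.triv_char (a+1) b x]
  simp only [htB, Stmt7Aux.flip_left, Stmt7Aux.flip_right, Pi.mul_apply]
  constructor
  · rintro (⟨h1, h2, h3⟩ | ⟨h1, h2, h3⟩)
    · exact ⟨⟨fun j hj => h1 j (by omega), h2, fun j hj => h3 j (by omega)⟩, h3⟩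
    · refine ⟨⟨?_, ?_, fun j hj => h3 j (by omega)⟩, h3⟩
      · intro j hj
        have hne : j ≠ ⟨a, har⟩ := by
          intro hc
          have : (j : ℕ) = a := congrArg Fin.val hc
          omega
        have := h1 j (by omega)
        rwa [show eVec r ⟨a, har⟩ j = 1 from by simp [eVec, hne], one_mul] at this
      · intro j hj
        have hAi := h3 ⟨a, har⟩ (Nat.lt_succ_self a)
        have hne : x.right j ≠ ⟨a, har⟩ := by
          intro hc
          have : j = x.right⁻¹ ⟨a, har⟩ := by rw [← hc, Equiv.Perm.inv_apply_self]
          have hv := congrArg Fin.val this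
          omega
        have := h2 j hj
        rwa [show eVec r ⟨a, har⟩ (x.right j) = 1 from by simp [eVec, hne], one_mul] at this
  · rintro ⟨⟨h1, h2, h3⟩, h4⟩
    rcases Stmt7Aux.two_cases (x.left ⟨a, har⟩) with hA | hA
    · left
      refine ⟨?_, h2, h4⟩
      intro j hj
      by_cases hje : (j : ℕ) = a
      · have hj' : j = ⟨a, har⟩ := Fin.ext hje
        rw [hj']
        exact hA
      · exact h1 j (by omega)
    · right
      refine ⟨?_, ?_, h4⟩
      · intro j hj
        by_cases hje : (j : ℕ) = a
        · have hj' : j = ⟨a, har⟩ := Fin.ext hje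
          rw [hj', hA, show eVec r ⟨a, har⟩ ⟨a, har⟩ = Multiplicative.ofAdd 1 from by
            simp [eVec]]
          decide
        · have hne : j ≠ ⟨a, har⟩ := fun hc => hje (congrArg Fin.val hc)
          rw [show eVec r ⟨a, har⟩ j = 1 from by simp [eVec, hne], one_mul]
          exact h1 j (by omega)
      · intro j hj
        have hAi := h4 ⟨a, har⟩ (Nat.lt_succ_self a)
        have hne : x.right j ≠ ⟨a, har⟩ := by
          intro hc
          have : j = x.right⁻¹ ⟨a, har⟩ := by rw [← hc, Equiv.Perm.inv_apply_self]
          have hv := congrArg Fin.val this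
          omega
        rw [show eVec r ⟨a, har⟩ (x.right j) = 1 from by simp [eVec, hne], one_mul]
        exact h2 j hj
end

section
/- Let Z' be a commutative ring, m ≥ 1 an integer, and E = (ZMod 2)^m an elementary abelian 2-group. Then I(Z'[E])^{m+1} ⊆ 2·I(Z'[E])^{m}; in particular, a power of the augmentation ideal of Z'[E] is contained in 2·Z'[E]. -/
open Pointwise

/-- The elementary abelian 2-group `E = (ZMod 2)^m` (written multiplicatively). -/
abbrev Egrp (m : ℕ) := Fin m → Multiplicative (ZMod 2)

/-- The augmentation ideal of the group algebra `Z'[E]`: the kernel of the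
`Z'`-algebra homomorphism `Z'[E] → Z'` sending every element of `E` to `1`. -/
noncomputable def augIdeal (Z' : Type) [CommRing Z'] (m : ℕ) :
    Ideal (MonoidAlgebra Z' (Egrp m)) :=
  RingHom.ker (MonoidAlgebra.lift Z' Z' (Egrp m) 1).toRingHom

noncomputable def Xgen (Z' : Type) [CommRing Z'] (m : ℕ) (i : Fin m) :
    MonoidAlgebra Z' (Egrp m) :=
  MonoidAlgebra.of Z' (Egrp m) (Pi.mulSingle i (Multiplicative.ofAdd 1)) - 1

lemma Xgen_sq (Z' : Type) [CommRing Z'] (m : ℕ) (i : Fin m) :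
    Xgen Z' m i ^ 2 = -2 * Xgen Z' m i := by
  set g := MonoidAlgebra.of Z' (Egrp m) (Pi.mulSingle i (Multiplicative.ofAdd 1)) with hg
  have hσ : (Pi.mulSingle i (Multiplicative.ofAdd (1 : ZMod 2)) : Egrp m) *
      Pi.mulSingle i (Multiplicative.ofAdd 1) = 1 := by
    rw [← Pi.mulSingle_mul]
    have : (Multiplicative.ofAdd (1 : ZMod 2)) * Multiplicative.ofAdd 1 = 1 := by decide
    rw [this, Pi.mulSingle_one]
  have hgg : g * g = 1 := by rw [hg, ← map_mul, hσ, map_one]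
  have h1 : Xgen Z' m i ^ 2 = g * g - 2 * g + 1 := by rw [Xgen, ← hg]; ring
  rw [h1, hgg, Xgen, ← hg]; ring

lemma of_sub_one_mem (Z' : Type) [CommRing Z'] (m : ℕ) (g : Egrp m) :
    MonoidAlgebra.of Z' (Egrp m) g - 1 ∈ Ideal.span (Set.range (Xgen Z' m)) := by
  set J := Ideal.span (Set.range (Xgen Z' m)) with hJ
  have aux : ∀ s : Finset (Fin m),
      MonoidAlgebra.of Z' (Egrp m) (∏ i ∈ s, Pi.mulSingle i (g i)) - 1 ∈ J := by
    intro s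
    induction s using Finset.induction with
    | empty =>
      rw [Finset.prod_empty, map_one, sub_self]; exact J.zero_mem
    | @insert a s ha ih =>
      rw [Finset.prod_insert ha, map_mul]
      set u := MonoidAlgebra.of Z' (Egrp m) (Pi.mulSingle a (g a)) - 1 with hu
      set v := MonoidAlgebra.of Z' (Egrp m) (∏ i ∈ s, Pi.mulSingle i (g i)) - 1 with hv
      have hsplit : MonoidAlgebra.of Z' (Egrp m) (Pi.mulSingle a (g a)) *
          MonoidAlgebra.of Z' (Egrp m) (∏ i ∈ s, Pi.mulSingle i (g i)) - 1
          = u * v + u + v := by rw [hu, hv]; ring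
      rw [hsplit]
      have hmemu : u ∈ J := by
        rcases (by decide : ∀ x : Multiplicative (ZMod 2),
            x = 1 ∨ x = Multiplicative.ofAdd 1) (g a) with h | h
        · rw [hu, h, Pi.mulSingle_one, map_one, sub_self]; exact J.zero_mem
        · rw [hu, h]
          exact Ideal.subset_span ⟨a, rfl⟩
      exact J.add_mem (J.add_mem (J.mul_mem_left u ih) hmemu) ih
  have := aux Finset.univ
  rwa [Finset.univ_prod_mulSingle g] at this

lemma augIdeal_eq (Z' : Type) [CommRing Z'] (m : ℕ) :
    augIdeal Z' m = Ideal.span (Set.range (Xgen Z' m)) := by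
  apply le_antisymm
  · intro f hf
    have hf0 : (MonoidAlgebra.lift Z' Z' (Egrp m) 1) f = 0 := hf
    have hsum : ∑ g ∈ f.coeff.support, f.coeff g = 0 := by
      rw [MonoidAlgebra.lift_apply] at hf0
      simpa [Finsupp.sum] using hf0
    have h1 : ∑ g ∈ f.coeff.support, f.coeff g • MonoidAlgebra.of Z' (Egrp m) g = f := by
      conv_rhs => rw [← MonoidAlgebra.sum_coeff_single f]
      rw [Finsupp.sum]
      exact Finset.sum_congr rfl fun g _ => by
        rw [MonoidAlgebra.of_apply, MonoidAlgebra.smul_single', mul_one]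
    have key : f = ∑ g ∈ f.coeff.support, f.coeff g • (MonoidAlgebra.of Z' (Egrp m) g - 1) := by
      simp only [smul_sub]
      rw [Finset.sum_sub_distrib, h1, ← Finset.sum_smul, hsum, zero_smul, sub_zero]
    rw [key]
    exact Ideal.sum_mem _ fun g _ =>
      Submodule.smul_of_tower_mem _ _ (of_sub_one_mem Z' m g)
  · rw [Ideal.span_le]
    rintro _ ⟨i, rfl⟩
    show Xgen Z' m i ∈ augIdeal Z' m
    simp [augIdeal, Xgen, RingHom.mem_ker]

lemma prod_mem_pow' {R : Type} [CommRing R] (I : Ideal R) {ι : Type} [DecidableEq ι]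
    (s : Finset ι) (f : ι → R) (h : ∀ i ∈ s, f i ∈ I) :
    ∏ i ∈ s, f i ∈ I ^ s.card := by
  induction s using Finset.induction with
  | empty => simp
  | @insert a s ha ih =>
    rw [Finset.prod_insert ha, Finset.card_insert_of_notMem ha, pow_succ']
    exact Ideal.mul_mem_mul (h _ (Finset.mem_insert_self a s))
      (ih fun i hi => h i (Finset.mem_insert_of_mem hi))

/-- **Statement 12.** For a commutative ring `Z'` and `E = (ZMod 2)^m` with `m ≥ 1`,
one has `I(Z'[E])^{m+1} ⊆ 2·I(Z'[E])^m`; in particular a power of the augmentation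
ideal of `Z'[E]` is contained in `2·Z'[E]`. -/
theorem stmt12 (Z' : Type) [CommRing Z'] (m : ℕ) (hm : 1 ≤ m) :
    augIdeal Z' m ^ (m + 1) ≤
      Ideal.span {(2 : MonoidAlgebra Z' (Egrp m))} * augIdeal Z' m ^ m ∧
    augIdeal Z' m ^ (m + 1) ≤ Ideal.span {(2 : MonoidAlgebra Z' (Egrp m))} := by
  have hI := augIdeal_eq Z' m
  have main : augIdeal Z' m ^ (m + 1) ≤
      Ideal.span {(2 : MonoidAlgebra Z' (Egrp m))} * augIdeal Z' m ^ m := by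
    have hpow : Ideal.span (Set.range (Xgen Z' m)) ^ (m + 1) =
        Ideal.span (Set.range (Xgen Z' m) ^ (m + 1)) :=
      Submodule.span_pow _ _
    rw [hI, hpow, Ideal.span_le]
    intro x hx
    rw [Set.mem_pow] at hx
    obtain ⟨F, hF⟩ := hx
    choose idx hidx using fun j => (F j).2
    have hninj : ¬ Function.Injective idx := by
      intro hinj
      have := Fintype.card_le_of_injective idx hinj
      simp only [Fintype.card_fin] at this
      omega
    obtain ⟨j, k, hjk, hne⟩ := Function.not_injective_iff.mp hninj
    set i := idx j with hi
    have hxprod : x = ∏ l : Fin (m + 1), Xgen Z' m (idx l) := by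
      rw [← hF, List.prod_ofFn]
      exact Finset.prod_congr rfl fun l _ => (hidx l).symm
    have hk : k ∈ Finset.univ.erase j := by
      simp [hne.symm]
    set s := (Finset.univ.erase j).erase k with hs
    have hsplit : x = Xgen Z' m i ^ 2 * ∏ l ∈ s, Xgen Z' m (idx l) := by
      rw [hxprod, ← Finset.mul_prod_erase _ _ (Finset.mem_univ j),
        ← Finset.mul_prod_erase _ _ hk, ← hs, ← hjk, ← hi]
      ring
    have hcard : s.card = m - 1 := by
      rw [hs, Finset.card_erase_of_mem hk, Finset.card_erase_of_mem (Finset.mem_univ j),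
        Finset.card_univ, Fintype.card_fin]
      omega
    have hrest : Xgen Z' m i * ∏ l ∈ s, Xgen Z' m (idx l) ∈
        Ideal.span (Set.range (Xgen Z' m)) ^ m := by
      have h1 : ∏ l ∈ s, Xgen Z' m (idx l) ∈
          Ideal.span (Set.range (Xgen Z' m)) ^ (m - 1) := by
        rw [← hcard]
        exact prod_mem_pow' _ s _ fun l _ => Ideal.subset_span ⟨idx l, rfl⟩
      have h2 : Xgen Z' m i ∈ Ideal.span (Set.range (Xgen Z' m)) :=
        Ideal.subset_span ⟨i, rfl⟩
      have h4 := Ideal.mul_mem_mul h2 h1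
      rw [← pow_succ'] at h4
      have h5 : m - 1 + 1 = m := by omega
      rwa [h5] at h4
    rw [hsplit, Xgen_sq]
    have heq : -2 * Xgen Z' m i * ∏ l ∈ s, Xgen Z' m (idx l) =
        2 * -(Xgen Z' m i * ∏ l ∈ s, Xgen Z' m (idx l)) := by ring
    rw [heq]
    exact Ideal.mul_mem_mul (Ideal.mem_span_singleton_self 2)
      (Submodule.neg_mem _ hrest)
  exact ⟨main, main.trans Ideal.mul_le_left⟩
end
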